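/- arXiv:1806.03026 — 9 statements merged into one kernel-verified Lean document; each statement's English description precedes it below -/
import Mathlib

section
/- For all natural numbers n ≥ 1, n! < √(2π) · ((n + 1/2)/e)^(n + 1/2). -/
open Real Filter Topology

noncomputable def burnsideTheta (x : ℝ) : ℝ :=
  Real.log (1 + x) - Real.log (1 - x) + x * (Real.log (1 + x) + Real.log (1 - x)) - 2 * x

lemma burnsideTheta_hasDerivAt {t : ℝ} (h1 : -1 < t) (h2 : t < 1) :
    HasDerivAt burnsideTheta (Real.log (1 + t) + Real.log (1 - t)) t := by
  have hp : (0:ℝ) < 1 + t := by linarith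
  have hq : (0:ℝ) < 1 - t := by linarith
  have d1 : HasDerivAt (fun x : ℝ => Real.log (1 + x)) (1 / (1 + t)) t := by
    have := ((hasDerivAt_id t).const_add 1).log hp.ne'
    simpa using this
  have d2 : HasDerivAt (fun x : ℝ => Real.log (1 - x)) (-1 / (1 - t)) t := by
    have := ((hasDerivAt_id t).const_sub 1).log hq.ne'
    simpa using this
  have d3 : HasDerivAt (fun x : ℝ => x * (Real.log (1 + x) + Real.log (1 - x)))
      (1 * (Real.log (1 + t) + Real.log (1 - t)) + t * (1 / (1 + t) + -1 / (1 - t))) t :=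
    (hasDerivAt_id t).mul (d1.add d2)
  have d4 : HasDerivAt (fun x : ℝ => 2 * x) 2 t := by
    simpa using (hasDerivAt_id t).const_mul 2
  have := ((d1.sub d2).add d3).sub d4
  refine this.congr_deriv ?_
  field_simp
  ring

lemma burnsideTheta_neg {x : ℝ} (hx0 : 0 < x) (hx1 : x < 1) : burnsideTheta x < 0 := by
  have key : StrictAntiOn burnsideTheta (Set.Icc 0 x) := by
    apply strictAntiOn_of_deriv_neg (convex_Icc 0 x)
    · intro t ht
      simp only [Set.mem_Icc] at ht
      exact (burnsideTheta_hasDerivAt (by linarith [ht.1]) (by linarith [ht.2])).continuousAt.continuousWithinAt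
    · intro t ht
      rw [interior_Icc, Set.mem_Ioo] at ht
      have ht0 : -1 < t := by linarith [ht.1]
      have ht1 : t < 1 := by linarith [ht.2]
      rw [(burnsideTheta_hasDerivAt ht0 ht1).deriv]
      have hp : (0:ℝ) < 1 + t := by linarith
      have hq : (0:ℝ) < 1 - t := by linarith
      rw [← Real.log_mul hp.ne' hq.ne']
      apply Real.log_neg (by nlinarith)
      nlinarith [ht.1]
  have h0 : burnsideTheta 0 = 0 := by simp [burnsideTheta]
  have := key (Set.left_mem_Icc.2 hx0.le) (Set.right_mem_Icc.2 hx0.le) hx0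
  rwa [h0] at this

lemma burnside_step {m : ℝ} (hm : 1 ≤ m) :
    (m + 1/2) * (Real.log (m + 1/2) - 1) - (m - 1/2) * (Real.log (m - 1/2) - 1)
      < Real.log m := by
  have hm0 : (0:ℝ) < m := by linarith
  set x : ℝ := 1 / (2 * m) with hxdef
  have hx0 : 0 < x := by positivity
  have hx1 : x < 1 := by
    rw [hxdef, div_lt_one (by linarith)]; linarith
  have hmx : m * x = 1/2 := by rw [hxdef]; field_simp
  have e1 : m + 1/2 = m * (1 + x) := by rw [hxdef]; field_simp
  have e2 : m - 1/2 = m * (1 - x) := by rw [hxdef]; field_simp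
  have l1 : Real.log (m + 1/2) = Real.log m + Real.log (1 + x) := by
    rw [e1, Real.log_mul hm0.ne' (by linarith)]
  have l2 : Real.log (m - 1/2) = Real.log m + Real.log (1 - x) := by
    rw [e2, Real.log_mul hm0.ne' (by linarith)]
  have hf : burnsideTheta x < 0 := burnsideTheta_neg hx0 hx1
  have hmf : m * burnsideTheta x < 0 := mul_neg_of_pos_of_neg hm0 hf
  rw [l1, l2]
  unfold burnsideTheta at hmf
  have key : (m + 1/2) * (Real.log m + Real.log (1+x) - 1)
      - (m - 1/2) * (Real.log m + Real.log (1-x) - 1) - Real.log m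
      = m * (Real.log (1+x) - Real.log (1-x) + x*(Real.log (1+x)+Real.log (1-x)) - 2*x) := by
    linear_combination (2 - Real.log (1+x) - Real.log (1-x)) * hmx
  linarith [hmf, key]

noncomputable def burnsideSeq (n : ℕ) : ℝ :=
  Real.log n.factorial - ((n : ℝ) + 1/2) * (Real.log ((n : ℝ) + 1/2) - 1)

lemma burnsideSeq_strictMono : StrictMono burnsideSeq := by
  apply strictMono_nat_of_lt_succ
  intro n
  have hstep := burnside_step (m := (n : ℝ) + 1) (by norm_num)
  have hfact : Real.log ((n+1).factorial : ℝ) = Real.log ((n:ℝ) + 1) + Real.log (n.factorial : ℝ) := by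
    rw [Nat.factorial_succ]
    push_cast
    rw [Real.log_mul (by positivity) (by positivity)]
  unfold burnsideSeq
  push_cast
  have e1 : (n:ℝ) + 1 + 1/2 = ((n:ℝ) + 1) + 1/2 := by ring
  have e2 : (n:ℝ) + 1/2 = ((n:ℝ) + 1) - 1/2 := by ring
  rw [hfact, e1, e2]
  linarith [hstep]

lemma burnsideSeq_tendsto :
    Tendsto burnsideSeq atTop (𝓝 (Real.log (Real.sqrt (2 * π)))) := by
  have heq : ∀ᶠ n : ℕ in atTop,
      Real.log (Stirling.stirlingSeq n) + (1/2) * Real.log 2 + 1/2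
        - ((n:ℝ) + 1/2) * Real.log (1 + (1/2)/(n:ℝ)) = burnsideSeq n := by
    filter_upwards [eventually_ge_atTop 1] with n hn
    have hn0 : (0:ℝ) < n := by exact_mod_cast hn
    have hform := Stirling.log_stirlingSeq_formula n
    have hlogdiv : Real.log ((n:ℝ) / Real.exp 1) = Real.log n - 1 := by
      rw [Real.log_div hn0.ne' (Real.exp_ne_zero 1), Real.log_exp]
    have hlog2n : Real.log (2 * (n:ℝ)) = Real.log 2 + Real.log n :=
      Real.log_mul two_ne_zero hn0.ne'
    have he : (n:ℝ) + 1/2 = n * (1 + (1/2)/n) := by field_simp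
    have hl : Real.log ((n:ℝ) + 1/2) = Real.log n + Real.log (1 + (1/2)/(n:ℝ)) := by
      rw [he, Real.log_mul hn0.ne' (by positivity)]
    unfold burnsideSeq
    rw [hl, hform, hlogdiv, hlog2n]
    ring
  have t1 : Tendsto (fun n : ℕ => Real.log (Stirling.stirlingSeq n)) atTop
      (𝓝 (Real.log (Real.sqrt π))) :=
    ((Real.continuousAt_log (Real.sqrt_pos.2 Real.pi_pos).ne').tendsto).comp
      Stirling.tendsto_stirlingSeq_sqrt_pi
  have t2 : Tendsto (fun n : ℕ => (n:ℝ) * Real.log (1 + (1/2)/(n:ℝ))) atTop (𝓝 (1/2)) :=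
    (Real.tendsto_mul_log_one_add_div_atTop (1/2)).comp tendsto_natCast_atTop_atTop
  have t3 : Tendsto (fun n : ℕ => Real.log (1 + (1/2)/(n:ℝ))) atTop (𝓝 0) := by
    have h : Tendsto (fun n : ℕ => 1 + (1/2)/(n:ℝ)) atTop (𝓝 1) := by
      have h2 := (tendsto_const_nhds (x := (1/2:ℝ)) (f := atTop (α := ℕ))).div_atTop
        tendsto_natCast_atTop_atTop
      simpa using tendsto_const_nhds.add h2
    have := ((Real.continuousAt_log one_ne_zero).tendsto).comp h
    simpa [Function.comp_def] using this
  have t4 : Tendsto (fun n : ℕ => ((n:ℝ) + 1/2) * Real.log (1 + (1/2)/(n:ℝ))) atTop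
      (𝓝 (1/2)) := by
    have := t2.add (t3.const_mul (1/2))
    rw [mul_zero, add_zero] at this
    refine this.congr (fun n => by ring)
  have total : Tendsto (fun n : ℕ => Real.log (Stirling.stirlingSeq n) + (1/2) * Real.log 2
      + 1/2 - ((n:ℝ) + 1/2) * Real.log (1 + (1/2)/(n:ℝ))) atTop
      (𝓝 (Real.log (Real.sqrt π) + (1/2) * Real.log 2 + 1/2 - 1/2)) :=
    ((t1.add_const _).add_const _).sub t4
  have hval : Real.log (Real.sqrt π) + (1/2) * Real.log 2 + 1/2 - 1/2
      = Real.log (Real.sqrt (2 * π)) := by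
    rw [Real.log_sqrt Real.pi_pos.le, Real.log_sqrt (by positivity),
      Real.log_mul two_ne_zero Real.pi_pos.ne']
    ring
  rw [hval] at total
  exact total.congr' heq

lemma burnsideSeq_lt (n : ℕ) : burnsideSeq n < Real.log (Real.sqrt (2 * π)) :=
  lt_of_lt_of_le (burnsideSeq_strictMono (Nat.lt_succ_self n))
    (burnsideSeq_strictMono.monotone.ge_of_tendsto burnsideSeq_tendsto (n + 1))

theorem burnside_upper (n : ℕ) (hn : 1 ≤ n) :
    (n.factorial : ℝ) < Real.sqrt (2 * π) * (((n : ℝ) + 1/2) / exp 1) ^ ((n : ℝ) + 1/2) := by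
  have hb := burnsideSeq_lt n
  have hpos : (0:ℝ) < n.factorial := by exact_mod_cast n.factorial_pos
  have hbase : (0:ℝ) < ((n:ℝ) + 1/2) / Real.exp 1 := by positivity
  have h2pi : (0:ℝ) < Real.sqrt (2 * π) := Real.sqrt_pos.2 (by positivity)
  calc (n.factorial : ℝ) = Real.exp (Real.log n.factorial) := (Real.exp_log hpos).symm
    _ < Real.exp (Real.log (Real.sqrt (2 * π))
          + ((n:ℝ) + 1/2) * (Real.log ((n:ℝ) + 1/2) - 1)) := by
        apply Real.exp_lt_exp.2
        unfold burnsideSeq at hb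
        linarith
    _ = Real.sqrt (2 * π) * Real.exp (((n:ℝ) + 1/2) * (Real.log ((n:ℝ) + 1/2) - 1)) := by
        rw [Real.exp_add, Real.exp_log h2pi]
    _ = Real.sqrt (2 * π) * (((n : ℝ) + 1/2) / exp 1) ^ ((n : ℝ) + 1/2) := by
        rw [Real.rpow_def_of_pos hbase,
          Real.log_div (by positivity) (Real.exp_ne_zero 1), Real.log_exp]
        ring_nf
end

section
/- If b is a real constant such that √(2π) · ((n + b)/e)^(n + b) ≥ n! for all natural numbers n ≥ 1, then b ≥ 1/2. -/
open Real Filter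

lemma sqrt_pi_le_stirlingSeq (m : ℕ) : Real.sqrt π ≤ Stirling.stirlingSeq (m + 1) :=
  Stirling.stirlingSeq'_antitone.le_of_tendsto
    (Stirling.tendsto_stirlingSeq_sqrt_pi.comp (tendsto_add_atTop_nat 1)) m

theorem upper_constant_optimal (b : ℝ)
    (h : ∀ n : ℕ, 1 ≤ n →
      (n.factorial : ℝ) ≤ Real.sqrt (2 * π) * (((n : ℝ) + b) / exp 1) ^ ((n : ℝ) + b)) :
    (1:ℝ)/2 ≤ b := by
  by_contra hb
  push_neg at hb
  set ε : ℝ := 1/2 - b with hεdef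
  clear_value ε
  have hε0 : 0 < ε := by rw [hεdef]; linarith
  set s : ℝ := b * Real.log 2 / ε + 1 with hsdef
  clear_value s
  set n : ℕ := ⌈Real.exp s + |b| + 2⌉₊ with hndef
  have hnr : Real.exp s + |b| + 2 ≤ (n : ℝ) := Nat.le_ceil _
  clear_value n
  have habs : 0 ≤ |b| := abs_nonneg b
  have hexp : 0 < Real.exp s := Real.exp_pos s
  have hn2 : (2:ℝ) ≤ (n:ℝ) := by linarith
  have hn1 : 1 ≤ n := by exact_mod_cast le_trans (by norm_num : (1:ℝ) ≤ 2) hn2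
  have hn0 : (0:ℝ) < n := by linarith
  have hnb2 : (2:ℝ) ≤ (n:ℝ) + b := by nlinarith [neg_abs_le b]
  have hnb0 : (0:ℝ) < (n:ℝ) + b := by linarith
  have hbn : b ≤ (n:ℝ) := by nlinarith [le_abs_self b]
  have hlogn : s ≤ Real.log n := by
    rw [← Real.log_exp s]
    exact Real.log_le_log hexp (by linarith)
  have hlog2 : Real.log 2 ≤ Real.log n := Real.log_le_log (by norm_num) hn2
  have hlog2pos : (0:ℝ) < Real.log 2 := Real.log_pos (by norm_num)
  -- lower bound from Stirling
  have hD : 0 < Real.sqrt (2*(n:ℝ)) * ((n:ℝ)/Real.exp 1)^n := by positivity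
  have hst : Real.sqrt π ≤ Stirling.stirlingSeq n := by
    obtain ⟨m, hm⟩ := Nat.exists_eq_succ_of_ne_zero (by omega : n ≠ 0)
    rw [hm]
    exact sqrt_pi_le_stirlingSeq m
  have hlow : Real.sqrt π * (Real.sqrt (2*(n:ℝ)) * ((n:ℝ)/Real.exp 1)^n) ≤ n.factorial := by
    rw [Stirling.stirlingSeq, le_div_iff₀ hD] at hst
    exact hst
  have hup := h n hn1
  have key : Real.sqrt (n:ℝ) * ((n:ℝ)/Real.exp 1)^n ≤ (((n:ℝ)+b)/Real.exp 1)^((n:ℝ)+b) := by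
    have hsq : Real.sqrt π * Real.sqrt (2*(n:ℝ)) = Real.sqrt (2*π) * Real.sqrt (n:ℝ) := by
      rw [Real.sqrt_mul (by norm_num : (0:ℝ) ≤ 2), Real.sqrt_mul (by norm_num : (0:ℝ) ≤ 2)]
      ring
    have h1 : Real.sqrt (2*π) * (Real.sqrt (n:ℝ) * ((n:ℝ)/Real.exp 1)^n)
        ≤ Real.sqrt (2*π) * ((((n:ℝ)+b)/Real.exp 1)^((n:ℝ)+b)) := by
      calc Real.sqrt (2*π) * (Real.sqrt (n:ℝ) * ((n:ℝ)/Real.exp 1)^n)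
          = Real.sqrt π * (Real.sqrt (2*(n:ℝ)) * ((n:ℝ)/Real.exp 1)^n) := by
            rw [← mul_assoc, ← mul_assoc, ← hsq]
        _ ≤ n.factorial := hlow
        _ ≤ _ := hup
    have h2π : 0 < Real.sqrt (2*π) := Real.sqrt_pos.mpr (by positivity)
    exact le_of_mul_le_mul_left h1 h2π
  -- take logs
  have hLpos : 0 < Real.sqrt (n:ℝ) * ((n:ℝ)/Real.exp 1)^n := by positivity
  have hlog : (1/2)*Real.log (n:ℝ) + (n:ℝ)*(Real.log (n:ℝ) - 1)
      ≤ ((n:ℝ)+b)*(Real.log ((n:ℝ)+b) - 1) := by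
    have := Real.log_le_log hLpos key
    rw [Real.log_mul (by positivity) (by positivity), Real.log_sqrt hn0.le,
      Real.log_pow, Real.log_rpow (by positivity),
      Real.log_div hn0.ne' (Real.exp_ne_zero 1),
      Real.log_div hnb0.ne' (Real.exp_ne_zero 1), Real.log_exp] at this
    push_cast at this ⊢
    linarith
  -- estimate n*(log(n+b) - log n) ≤ b
  have hest : (n:ℝ)*(Real.log ((n:ℝ)+b) - Real.log (n:ℝ)) ≤ b := by
    have h1 : Real.log (((n:ℝ)+b)/(n:ℝ)) ≤ ((n:ℝ)+b)/(n:ℝ) - 1 :=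
      Real.log_le_sub_one_of_pos (by positivity)
    rw [Real.log_div hnb0.ne' hn0.ne'] at h1
    have h2 : ((n:ℝ)+b)/(n:ℝ) - 1 = b / (n:ℝ) := by field_simp; ring
    rw [h2] at h1
    calc (n:ℝ)*(Real.log ((n:ℝ)+b) - Real.log (n:ℝ)) ≤ (n:ℝ) * (b / (n:ℝ)) := by
          exact mul_le_mul_of_nonneg_left h1 hn0.le
      _ = b := by field_simp
  -- hence (1/2) log n ≤ b * log(n+b)
  have hmain : (1/2)*Real.log (n:ℝ) ≤ b * Real.log ((n:ℝ)+b) := by nlinarith [hlog, hest]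
  rcases le_or_gt b 0 with hbneg | hbpos
  · have : Real.log 2 ≤ Real.log ((n:ℝ)+b) := Real.log_le_log (by norm_num) hnb2
    nlinarith
  · have hle : Real.log ((n:ℝ)+b) ≤ Real.log 2 + Real.log (n:ℝ) := by
      rw [← Real.log_mul (by norm_num) hn0.ne']
      exact Real.log_le_log hnb0 (by linarith)
    have h6 : b * Real.log ((n:ℝ)+b) ≤ b * (Real.log 2 + Real.log (n:ℝ)) :=
      mul_le_mul_of_nonneg_left hle hbpos.le
    have h7 : b * (Real.log 2 + Real.log (n:ℝ)) = b * Real.log 2 + b * Real.log (n:ℝ) := by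
      ring
    have h3 : ε * Real.log (n:ℝ) ≤ b * Real.log 2 := by
      rw [hεdef, sub_mul]
      linarith [hmain, h6]
    have h4 : Real.log (n:ℝ) ≤ b * Real.log 2 / ε := (le_div_iff₀ hε0).mpr (by linarith [h3])
    have h5 : b * Real.log 2 / ε + 1 ≤ Real.log (n:ℝ) := by rw [← hsdef]; exact hlogn
    linarith
end

section
/- If a is a real constant with a ≥ 0 such that √(2π) · ((n + a)/e)^(n + a) ≤ n! for all natural numbers n ≥ 1, then a ≤ t₀, where t₀ is the unique root in (0,1) of (t+1)·log(t+1) + (1/2)·log(2π) − t − 1 = 0. -/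
open Real

lemma aux_f_strictMono : StrictMonoOn (fun t : ℝ => (t + 1) * Real.log (t + 1) - t) (Set.Ici 0) := by
  apply strictMonoOn_of_deriv_pos (convex_Ici 0)
  · apply ContinuousOn.sub _ continuousOn_id
    apply ContinuousOn.mul (continuousOn_id.add continuousOn_const)
    apply ContinuousOn.log (continuousOn_id.add continuousOn_const)
    intro x hx
    simp only [Set.mem_Ici] at hx
    simp only [Pi.add_apply, id]
    nlinarith
  · intro x hx
    rw [interior_Ici] at hx
    simp only [Set.mem_Ioi] at hx
    have hx1 : x + 1 ≠ 0 := by nlinarith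
    have h1 : HasDerivAt (fun t : ℝ => t + 1) 1 x := (hasDerivAt_id x).add_const 1
    have h2 : HasDerivAt (fun t : ℝ => Real.log (t + 1)) (1 / (x + 1)) x := by
      simpa using h1.log hx1
    have h3 : HasDerivAt (fun t : ℝ => (t + 1) * Real.log (t + 1))
        (1 * Real.log (x + 1) + (x + 1) * (1 / (x + 1))) x := h1.mul h2
    have h4 : HasDerivAt (fun t : ℝ => (t + 1) * Real.log (t + 1) - t)
        (1 * Real.log (x + 1) + (x + 1) * (1 / (x + 1)) - 1) x := h3.sub (hasDerivAt_id x)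
    rw [h4.deriv]
    have : (x + 1) * (1 / (x + 1)) = 1 := by field_simp
    rw [this]
    have : 0 < Real.log (x + 1) := Real.log_pos (by linarith)
    linarith

theorem lower_constant_optimal (a t₀ : ℝ) (ha : 0 ≤ a)
    (ht₀ : t₀ ∈ Set.Ioo (0:ℝ) 1)
    (hroot : (t₀ + 1) * Real.log (t₀ + 1) + (1/2) * Real.log (2 * π) - t₀ - 1 = 0)
    (h : ∀ n : ℕ, 1 ≤ n →
      Real.sqrt (2 * π) * (((n : ℝ) + a) / exp 1) ^ ((n : ℝ) + a) ≤ (n.factorial : ℝ)) :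
    a ≤ t₀ := by
  have h2π : (0:ℝ) < 2 * π := by positivity
  have h1 := h 1 le_rfl
  simp only [Nat.cast_one, Nat.factorial_one] at h1
  -- h1 : sqrt (2π) * ((1 + a)/e)^(1+a) ≤ 1
  have hbpos : (0:ℝ) < (1 + a) / exp 1 := by positivity
  have hLpos : (0:ℝ) < Real.sqrt (2 * π) * ((1 + a) / exp 1) ^ ((1:ℝ) + a) := by
    have := Real.rpow_pos_of_pos hbpos ((1:ℝ) + a)
    positivity
  have hlog : Real.log (Real.sqrt (2 * π) * ((1 + a) / exp 1) ^ ((1:ℝ) + a)) ≤ 0 := by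
    calc Real.log (Real.sqrt (2 * π) * ((1 + a) / exp 1) ^ ((1:ℝ) + a))
        ≤ Real.log 1 := Real.log_le_log hLpos h1
      _ = 0 := Real.log_one
  rw [Real.log_mul (ne_of_gt (Real.sqrt_pos.mpr h2π)) (ne_of_gt (Real.rpow_pos_of_pos hbpos _)),
    Real.log_sqrt (le_of_lt h2π), Real.log_rpow hbpos,
    Real.log_div (by linarith) (exp_ne_zero 1), Real.log_exp] at hlog
  -- hlog : log(2π)/2 + (1+a)*(log(1+a) - 1) ≤ 0
  have hfa : (a + 1) * Real.log (a + 1) - a ≤ (t₀ + 1) * Real.log (t₀ + 1) - t₀ := by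
    have : (t₀ + 1) * Real.log (t₀ + 1) - t₀ = 1 - (1/2) * Real.log (2 * π) := by linarith
    rw [this]
    have e1 : (1:ℝ) + a = a + 1 := by ring
    rw [e1] at hlog
    nlinarith [hlog]
  by_contra hlt
  push_neg at hlt
  have := aux_f_strictMono (Set.mem_Ici.mpr (le_of_lt ht₀.1)) (Set.mem_Ici.mpr ha) hlt
  simp only at this
  linarith
end

section
/- For every real b with 0 ≤ b ≤ 1/2, the function G_b(t) = (1/2)·log(2π) + (t+b)·log(t+b) − t − b − log Γ(t+1) is strictly decreasing on [1, ∞). -/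
open Real Filter Topology

-- midpoint log inequality with cubic margin
lemma aux_midpoint_log (c : ℝ) (hc : 2 ≤ c) :
    1/c + 1/(54*c^3) ≤ Real.log (c + 1/2) - Real.log (c - 1/2) := by
  have hc0 : (0:ℝ) < c := by linarith
  have hc3 : (0:ℝ) < c^3 := by positivity
  set t : ℝ := 1/c + 1/(54*c^3) with ht
  have ht0 : 0 ≤ t := by positivity
  have h1c : 1/c ≤ 1/2 := by
    rw [div_le_div_iff₀ hc0 (by norm_num)]; linarith
  have h2c : 1/(54*c^3) ≤ 1/432 := by
    rw [div_le_div_iff₀ (by positivity) (by norm_num)]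
    nlinarith [pow_le_pow_left₀ (by norm_num : (0:ℝ) ≤ 2) hc 3]
  have ht1 : t ≤ 1 := by rw [ht]; linarith
  have hexp : Real.exp t ≤ 1 + t + t^2/2 + t^3 * (2/9) := by
    have := Real.exp_bound' ht0 ht1 (n := 3) (by norm_num)
    simp [Finset.sum_range_succ] at this
    norm_num at this
    calc Real.exp t ≤ 1 + t + t^2/2 + t^3 * 4 / (6*3) := by convert this using 2 <;> norm_num
    _ = 1 + t + t^2/2 + t^3 * (2/9) := by ring
  have hden : (0:ℝ) < c - 1/2 := by linarith
  have hnum : (0:ℝ) < c + 1/2 := by linarith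
  have hrat : 1 + t + t^2/2 + t^3 * (2/9) ≤ (c + 1/2)/(c - 1/2) := by
    rw [le_div_iff₀ hden]
    have hu0 : (0:ℝ) < 1/c := by positivity
    have key : ∀ u : ℝ, 0 < u → u ≤ 1/2 →
        (1 + (u + u^3/54) + (u + u^3/54)^2/2 + (u + u^3/54)^3 * (2/9)) * (2 - u) ≤ 2 + u := by
      intro u hu hu2
      nlinarith [pow_pos hu 3, pow_pos hu 4, pow_pos hu 5, pow_pos hu 6, pow_pos hu 7,
        pow_pos hu 8, pow_pos hu 9, pow_pos hu 10,
        mul_le_of_le_one_left (le_of_lt (pow_pos hu 3)) (by nlinarith : u^2 ≤ 1),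
        sq_nonneg u, sq_nonneg (u^2), sq_nonneg (u^3), sq_nonneg (u^4), sq_nonneg (u^5)]
    have h := key (1/c) hu0 h1c
    have e1 : (1/c) + (1/c)^3/54 = t := by rw [ht]; field_simp
    rw [e1] at h
    -- (1+t+..)*(2-1/c) ≤ 2+1/c  ⇒ multiply by c/2 : (1+t+..)*(c-1/2) ≤ c+1/2
    have := mul_le_mul_of_nonneg_left h (le_of_lt (by positivity : (0:ℝ) < c/2))
    calc (1 + t + t^2/2 + t^3 * (2/9)) * (c - 1/2)
        = (c/2) * ((1 + t + t^2/2 + t^3 * (2/9)) * (2 - 1/c)) := by field_simp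
      _ ≤ (c/2) * (2 + 1/c) := this
      _ = c + 1/2 := by field_simp
  have : Real.exp t ≤ (c + 1/2)/(c - 1/2) := le_trans hexp hrat
  have hlog : t ≤ Real.log ((c + 1/2)/(c - 1/2)) :=
    (Real.le_log_iff_exp_le (by positivity)).2 this
  rwa [Real.log_div (by linarith) (by linarith)] at hlog

lemma aux_sum_bound (s : ℝ) (hs : 1 ≤ s) (n : ℕ) :
    ∑ m ∈ Finset.range (n+1), 1/(s+1+m) + 1/(54*(s+1)^3)
      ≤ Real.log (s + n + 3/2) - Real.log (s + 1/2) := by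
  induction n with
  | zero =>
    have h := aux_midpoint_log (s+1) (by linarith)
    have e1 : s + 1 + 1/2 = s + 0 + 3/2 := by ring
    have e2 : s + 1 - 1/2 = s + 1/2 := by ring
    rw [e1, e2] at h
    rw [Finset.sum_range_one]
    push_cast
    simp only [add_zero]
    simp only [add_zero] at h
    linarith
  | succ n ih =>
    have h := aux_midpoint_log (s + 1 + (n+1)) (by push_cast; linarith [Nat.cast_nonneg (α := ℝ) n])
    have e1 : s + 1 + (↑n+1) + 1/2 = s + (↑n+1) + 3/2 := by ring
    have e2 : s + 1 + (↑n+1) - 1/2 = s + ↑n + 3/2 := by ring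
    rw [e1, e2] at h
    have hpos : (0:ℝ) < 1/(54*(s+1+(↑n+1))^3) := by positivity
    rw [Finset.sum_range_succ]
    push_cast
    push_cast at ih h
    linarith

theorem G_b_strictAntiOn (b : ℝ) (hb0 : 0 ≤ b) (hb : b ≤ 1/2) :
    StrictAntiOn
      (fun t : ℝ => (1/2) * Real.log (2 * π) + (t + b) * Real.log (t + b) - t - b
        - Real.log (Real.Gamma (t + 1)))
      (Set.Ici (1:ℝ)) := by
  intro x hx y hy hxy
  simp only [Set.mem_Ici] at hx hy
  suffices H : ((y+b) * Real.log (y+b) - y) - ((x+b) * Real.log (x+b) - x)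
      < Real.log (Real.Gamma (y+1)) - Real.log (Real.Gamma (x+1)) by
    simp only
    linarith
  set δ : ℝ := 1/(54*(y+1)^3) with hδdef
  have hδ : 0 < δ := by positivity
  set ε : ℝ := δ/2 with hεdef
  obtain ⟨N, hN⟩ := exists_nat_ge ((2*(y+3/2))/δ)
  -- pointwise derivative inequality
  have pointwise : ∀ n : ℕ, N ≤ n → 1 ≤ n → ∀ s : ℝ, x ≤ s → s ≤ y →
      Real.log (s+b) + ε ≤ Real.log n - ∑ m ∈ Finset.range (n+1), 1/(s+1+m) := by
    intro n hNn h1n s hxs hsy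
    have hs1 : 1 ≤ s := le_trans hx hxs
    have hsb : 0 < s + b := by linarith
    have hn0 : (0:ℝ) < n := by exact_mod_cast h1n
    have h1 := aux_sum_bound s hs1 n
    have hmar : δ ≤ 1/(54*(s+1)^3) := by
      rw [hδdef]
      gcongr
    have hlog1 : Real.log (s+↑n+3/2) - Real.log n ≤ (y+3/2)/n := by
      have e : Real.log (s+↑n+3/2) - Real.log n = Real.log ((s+↑n+3/2)/n) :=
        (Real.log_div (by positivity) (by positivity)).symm
      rw [e]
      have h2 : Real.log ((s+↑n+3/2)/n) ≤ (s+↑n+3/2)/n - 1 :=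
        Real.log_le_sub_one_of_pos (by positivity)
      have e2 : (s+↑n+3/2)/n - 1 = (s+3/2)/n := by field_simp; ring
      rw [e2] at h2
      calc Real.log ((s+↑n+3/2)/n) ≤ (s+3/2)/n := h2
        _ ≤ (y+3/2)/n := by gcongr <;> linarith
    have hNb : (y+3/2)/n ≤ δ/2 := by
      rw [div_le_div_iff₀ hn0 (by norm_num)]
      have hNn' : (N:ℝ) ≤ n := by exact_mod_cast hNn
      have : 2*(y+3/2) ≤ δ * N := by
        rw [div_le_iff₀ hδ] at hN
        linarith [hN]
      nlinarith [hδ.le]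
    have hlogb : Real.log (s+b) ≤ Real.log (s+1/2) :=
      Real.log_le_log hsb (by linarith)
    linarith
  -- monotonicity step
  have main : ∀ n : ℕ, N ≤ n → 1 ≤ n →
      ((y+b) * Real.log (y+b) - y) - ((x+b) * Real.log (x+b) - x) + ε*(y-x)
        ≤ (y-x) * Real.log n
          - ((∑ m ∈ Finset.range (n+1), Real.log (y+1+m))
             - (∑ m ∈ Finset.range (n+1), Real.log (x+1+m))) := by
    intro n hNn h1n
    set Φ : ℝ → ℝ := fun t => t * Real.log n
        - (∑ m ∈ Finset.range (n+1), Real.log (t+1+↑m))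
        - ((t+b) * Real.log (t+b) - t) - ε*t with hΦ
    have hderiv : ∀ s : ℝ, 1 ≤ s → HasDerivAt Φ
        (Real.log n - (∑ m ∈ Finset.range (n+1), 1/(s+1+↑m)) - Real.log (s+b) - ε) s := by
      intro s hs
      have hsb : 0 < s + b := by linarith
      have hsum : HasDerivAt (fun t : ℝ => ∑ m ∈ Finset.range (n+1), Real.log (t+1+↑m))
          (∑ m ∈ Finset.range (n+1), 1/(s+1+↑m)) s := by
        apply HasDerivAt.fun_sum
        intro m _
        have h0 : (0:ℝ) < s+1+↑m := by
          have := Nat.cast_nonneg (α := ℝ) m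
          linarith
        have h1 : HasDerivAt (fun t : ℝ => t + 1 + ↑m) 1 s :=
          ((hasDerivAt_id s).add_const 1).add_const (m:ℝ)
        have h2 := h1.log (ne_of_gt h0)
        simpa using h2
      have hA : HasDerivAt (fun t : ℝ => t + b) 1 s := (hasDerivAt_id s).add_const b
      have hL := hA.log (ne_of_gt hsb)
      have hP : HasDerivAt (fun t : ℝ => (t+b) * Real.log (t+b))
          (Real.log (s+b) + 1) s := by
        have := hA.mul hL
        rw [one_mul, mul_one_div_cancel (ne_of_gt hsb)] at this
        exact this
      have hg' : HasDerivAt (fun t : ℝ => (t+b) * Real.log (t+b) - t)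
          (Real.log (s+b)) s := by
        have := hP.sub (hasDerivAt_id s)
        rw [add_sub_cancel_right] at this
        exact this
      have hlin : HasDerivAt (fun t : ℝ => t * Real.log n) (Real.log n) s := by
        simpa using (hasDerivAt_id s).mul_const (Real.log n)
      have hε : HasDerivAt (fun t : ℝ => ε * t) ε s := by
        simpa using (hasDerivAt_id s).const_mul ε
      exact ((hlin.sub hsum).sub hg').sub hε
    have hmono : MonotoneOn Φ (Set.Icc x y) := by
      apply monotoneOn_of_deriv_nonneg (convex_Icc x y)
      · intro s hs
        exact (hderiv s (le_trans hx hs.1)).continuousAt.continuousWithinAt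
      · rw [interior_Icc]
        intro s hs
        exact (hderiv s (by linarith [hs.1])).differentiableAt.differentiableWithinAt
      · rw [interior_Icc]
        intro s hs
        rw [(hderiv s (by linarith [hs.1])).deriv]
        have := pointwise n hNn h1n s hs.1.le hs.2.le
        linarith
    have hΦle := hmono (Set.left_mem_Icc.2 hxy.le) (Set.right_mem_Icc.2 hxy.le) hxy.le
    simp only [hΦ] at hΦle
    have e : (y-x) * Real.log n
          - ((∑ m ∈ Finset.range (n+1), Real.log (y+1+↑m))
             - (∑ m ∈ Finset.range (n+1), Real.log (x+1+↑m)))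
          - (((y+b) * Real.log (y+b) - y) - ((x+b) * Real.log (x+b) - x) + ε*(y-x))
        = (y * Real.log n - (∑ m ∈ Finset.range (n+1), Real.log (y+1+↑m))
            - ((y+b) * Real.log (y+b) - y) - ε*y)
          - (x * Real.log n - (∑ m ∈ Finset.range (n+1), Real.log (x+1+↑m))
            - ((x+b) * Real.log (x+b) - x) - ε*x) := by ring
    linarith [e, hΦle]
  -- limit step
  have hlim : Tendsto (fun n : ℕ => Real.BohrMollerup.logGammaSeq (y+1) n
        - Real.BohrMollerup.logGammaSeq (x+1) n) atTop
      (𝓝 (Real.log (Real.Gamma (y+1)) - Real.log (Real.Gamma (x+1)))) :=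
    (Real.BohrMollerup.tendsto_log_gamma (by linarith : (0:ℝ) < y+1)).sub
      (Real.BohrMollerup.tendsto_log_gamma (by linarith : (0:ℝ) < x+1))
  have hev : ∀ᶠ n : ℕ in atTop,
      ((y+b) * Real.log (y+b) - y) - ((x+b) * Real.log (x+b) - x) + ε*(y-x)
        ≤ Real.BohrMollerup.logGammaSeq (y+1) n - Real.BohrMollerup.logGammaSeq (x+1) n := by
    filter_upwards [eventually_ge_atTop N, eventually_ge_atTop 1] with n hNn h1n
    have hmain := main n hNn h1n
    simp only [Real.BohrMollerup.logGammaSeq]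
    have e : (y+1) * Real.log n - (x+1) * Real.log n = (y-x) * Real.log n := by ring
    linarith [e, hmain]
  have hfinal := ge_of_tendsto hlim hev
  have hpos : 0 < ε * (y-x) := by
    apply mul_pos (by positivity)
    linarith
  linarith
end

section
/- For all real t ≥ 1, log(t + 1/2) < ψ(t + 1), where ψ is the digamma function. -/
open Real Set Filter Topology

private lemma exp_mul_lt (x : ℝ) (hx : 0 < x) : Real.exp x * (2 - x) < 2 + x := by
  have key : ∀ y : ℝ, 0 ≤ y → y ≤ x → 0 ≤ (2 + y) * Real.exp (-y) - (2 - y) ∧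
      (0 < y → 0 < (2 + y) * Real.exp (-y) - (2 - y)) := by
    intro y hy hyx
    set g : ℝ → ℝ := fun z => (2 + z) * Real.exp (-z) - (2 - z) with hg
    have hder : ∀ z : ℝ, HasDerivAt g (1 - (1 + z) * Real.exp (-z)) z := by
      intro z
      have h1 : HasDerivAt (fun z : ℝ => Real.exp (-z)) (-Real.exp (-z)) z := by
        exact ((Real.hasDerivAt_exp (-z)).comp z (hasDerivAt_neg z)).congr_deriv (by ring)
      have h2 : HasDerivAt (fun z : ℝ => (2 + z)) 1 z := by
        simpa using (hasDerivAt_id z).const_add 2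
      have h3 := h2.mul h1
      have h4 : HasDerivAt (fun z : ℝ => (2 - z)) (-1) z := by
        exact (hasDerivAt_id' z).const_sub 2
      have := h3.sub h4
      exact this.congr_deriv (by ring)
    have hmono : StrictMonoOn g (Ici (0:ℝ)) := by
      apply strictMonoOn_of_deriv_pos (convex_Ici 0)
      · exact (Continuous.mul (by continuity) (by continuity)).sub (by continuity) |>.continuousOn
      · intro z hz
        rw [interior_Ici] at hz
        rw [(hder z).deriv]
        have h5 : (1 + z) * Real.exp (-z) < 1 := by
          have := Real.add_one_lt_exp (ne_of_gt hz)
          rw [Real.exp_neg]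
          rw [mul_inv_lt_iff₀ (Real.exp_pos z), one_mul]
          linarith
        linarith
    have hg0 : g 0 = 0 := by simp [hg]
    constructor
    · rcases eq_or_lt_of_le hy with h | h
      · simp [hg, ← h]
      · have := hmono (le_refl (0:ℝ) : (0:ℝ) ∈ Ici (0:ℝ)) (le_of_lt h : y ∈ Ici (0:ℝ)) h
        rw [hg0] at this; exact this.le
    · intro hy'
      have := hmono (le_refl (0:ℝ) : (0:ℝ) ∈ Ici (0:ℝ)) (le_of_lt hy' : y ∈ Ici (0:ℝ)) hy'
      rw [hg0] at this; exact this
  have h := (key x (le_of_lt hx) le_rfl).2 hx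
  have hexp := Real.exp_pos x
  have hrw : Real.exp (-x) = (Real.exp x)⁻¹ := Real.exp_neg x
  rw [hrw] at h
  have h' : (2 - x) < (2 + x) * (Real.exp x)⁻¹ := by linarith
  rw [← div_eq_mul_inv, lt_div_iff₀ hexp] at h'
  nlinarith

/-- key inequality: `1/u < log (u + 1/2) - log (u - 1/2)` for `u ≥ 1` (in fact `u > 1/2`). -/
private lemma one_div_lt_log_sub (u : ℝ) (hu : 1 ≤ u) :
    1 / u < Real.log (u + 1/2) - Real.log (u - 1/2) := by
  have hu0 : 0 < u := by linarith
  have h1 : (0:ℝ) < u - 1/2 := by linarith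
  have h2 : (0:ℝ) < u + 1/2 := by linarith
  rw [← Real.log_div (ne_of_gt h2) (ne_of_gt h1), lt_log_iff_exp_lt (by positivity)]
  rw [lt_div_iff₀ h1]
  have hx : 0 < 1/u := by positivity
  have h := exp_mul_lt (1/u) hx
  have h3 : Real.exp (1/u) * ((2 - 1/u) * u) < (2 + 1/u) * u := by
    rw [← mul_assoc]
    apply mul_lt_mul_of_pos_right h hu0
  have e1 : (2 - 1/u) * u = 2*u - 1 := by field_simp
  have e2 : (2 + 1/u) * u = 2*u + 1 := by field_simp
  rw [e1, e2] at h3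
  nlinarith

namespace DigammaAux

noncomputable def f : ℝ → ℝ := fun x => Real.log (Real.Gamma x)

lemma hder {x : ℝ} (hx : 0 < x) : DifferentiableAt ℝ f x := by
  refine ((Real.differentiableAt_Gamma ?_).log (Real.Gamma_ne_zero ?_)) <;>
  exact fun m ↦ (((neg_nonpos.mpr (Nat.cast_nonneg m)).trans_lt hx).ne')

lemma h_rec (x : ℝ) (hx : 0 < x) : f (x + 1) = f x + Real.log x := by
  simp only [f, Real.Gamma_add_one hx.ne',
    Real.log_mul hx.ne' (Real.Gamma_pos_of_pos hx).ne', add_comm]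

lemma hder_rec (x : ℝ) (hx : 0 < x) : deriv f (x + 1) = deriv f x + 1 / x := by
  rw [← deriv_comp_add_const, one_div, ← Real.deriv_log,
    ← deriv_add (hder <| by positivity) (Real.differentiableAt_log hx.ne')]
  apply Filter.EventuallyEq.deriv_eq
  filter_upwards [eventually_gt_nhds hx] using h_rec

lemma derivLB (x : ℝ) (hx : 0 < x) : Real.log x ≤ deriv f (x + 1) := by
  have hc : ConvexOn ℝ (Ioi 0) f := Real.convexOn_log_Gamma
  refine (le_of_eq ?_).trans <| hc.slope_le_deriv (mem_Ioi.mpr hx)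
    (by positivity : (0:ℝ) < x + 1) (by linarith) (hder <| by positivity)
  rw [slope_def_field, show x + 1 - x = (1 : ℝ) by ring, div_one, h_rec x hx,
    add_sub_cancel_left]

/-- The quantity `ψ(x+1) - log(x+1/2)`. -/
noncomputable def D (x : ℝ) : ℝ := deriv f (x + 1) - Real.log (x + 1/2)

lemma D_step (x : ℝ) (hx : 0 ≤ x) : D (x + 1) < D x := by
  have h1 : (0:ℝ) < x + 1 := by linarith
  have hrec := hder_rec (x + 1) h1
  have key := one_div_lt_log_sub (x + 1) (by linarith)
  simp only [D]
  rw [show x + 1 + 1 = (x + 1) + 1 by ring, hrec]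
  have e1 : x + 1 + 1/2 = (x + 1) + 1/2 := by ring
  have e2 : x + 1/2 = (x + 1) - 1/2 := by ring
  rw [e1, e2]
  linarith

lemma D_antitone (x : ℝ) (hx : 0 ≤ x) (n : ℕ) : D (x + n) ≤ D x := by
  induction n with
  | zero => simp
  | succ n ih =>
    have h := D_step (x + n) (by positivity)
    push_cast
    calc D (x + (n + 1)) = D ((x + n) + 1) := by ring_nf
    _ ≤ D (x + n) := h.le
    _ ≤ D x := ih

lemma D_lb (x : ℝ) (hx : 0 < x) : Real.log x - Real.log (x + 1/2) ≤ D x := by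
  have := derivLB x hx
  simp only [D]; linarith

lemma tendsto_aux (x : ℝ) (hx : 0 < x) :
    Tendsto (fun n : ℕ => Real.log (x + n) - Real.log (x + n + 1/2)) atTop (𝓝 0) := by
  have h1 : Tendsto (fun n : ℕ => (x + n) / (x + n + 1/2)) atTop (𝓝 1) := by
    have h2 : Tendsto (fun n : ℕ => x + n + 1/2) atTop atTop := by
      apply tendsto_atTop_add_const_right
      exact tendsto_atTop_add_const_left _ _ tendsto_natCast_atTop_atTop
    have h3 : Tendsto (fun n : ℕ => (1/2 : ℝ) / (x + n + 1/2)) atTop (𝓝 0) :=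
      Tendsto.div_atTop tendsto_const_nhds h2
    have h4 : ∀ n : ℕ, (x + n) / (x + n + 1/2) = 1 - (1/2) / (x + n + 1/2) := by
      intro n
      have : (0:ℝ) < x + n + 1/2 := by positivity
      field_simp
      ring
    simp_rw [h4]
    simpa using tendsto_const_nhds.sub h3
  have h5 : Tendsto (fun n : ℕ => Real.log ((x + n) / (x + n + 1/2))) atTop (𝓝 (Real.log 1)) :=
    (Real.continuousAt_log one_ne_zero).tendsto.comp h1
  rw [Real.log_one] at h5
  refine h5.congr fun n => ?_
  rw [Real.log_div (by positivity) (by positivity)]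

lemma D_nonneg (x : ℝ) (hx : 1 ≤ x) : 0 ≤ D x := by
  have hx0 : (0:ℝ) < x := by linarith
  refine le_of_tendsto (tendsto_aux x hx0) ?_
  filter_upwards with n
  calc Real.log (x + n) - Real.log (x + n + 1/2) ≤ D (x + n) := D_lb _ (by positivity)
  _ ≤ D x := D_antitone x (by linarith) n

end DigammaAux

theorem log_lt_digamma (t : ℝ) (ht : 1 ≤ t) :
    Real.log (t + 1/2) < deriv (fun x : ℝ => Real.log (Real.Gamma x)) (t + 1) := by
  have h1 : DigammaAux.D (t + 1) < DigammaAux.D t := DigammaAux.D_step t (by linarith)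
  have h2 : 0 ≤ DigammaAux.D (t + 1) := DigammaAux.D_nonneg (t + 1) (by linarith)
  have : 0 < DigammaAux.D t := lt_of_le_of_lt h2 h1
  simp only [DigammaAux.D, sub_pos] at this
  exact this
end

section
/- For all natural numbers n ≥ 1, √(2e) · ((n + 1/2)/e)^(n + 1/2) < n!. -/
open Real

lemma sqrtPi_le_stirlingSeq (n : ℕ) : Real.sqrt π ≤ Stirling.stirlingSeq (n + 1) :=
  Stirling.stirlingSeq'_antitone.le_of_tendsto
    (Stirling.tendsto_stirlingSeq_sqrt_pi.comp (Filter.tendsto_add_atTop_nat 1)) n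

lemma factorial_ge (n : ℕ) (hn : 1 ≤ n) :
    Real.sqrt π * (Real.sqrt (2 * n) * ((n : ℝ) / exp 1) ^ n) ≤ (n.factorial : ℝ) := by
  obtain ⟨m, rfl⟩ := Nat.exists_eq_succ_of_ne_zero (by omega : n ≠ 0)
  have h := sqrtPi_le_stirlingSeq m
  rw [Stirling.stirlingSeq] at h
  have hpos : 0 < Real.sqrt (2 * (↑(m+1) : ℝ)) * ((↑(m+1) : ℝ) / exp 1) ^ (m+1) := by
    positivity
  exact (le_div_iff₀ hpos).mp h

lemma nine_eighths_lt_log_pi : (9/8 : ℝ) < Real.log π := by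
  rw [Real.lt_log_iff_exp_lt Real.pi_pos]
  have h1 : exp (9/8 : ℝ) < 3.141592 := by
    have h8 : exp (9/8 : ℝ) ^ 8 = exp 1 ^ 9 := by
      rw [← Real.exp_nat_mul, ← Real.exp_nat_mul]; norm_num
    have h2 : exp 1 ^ 9 < 2.7182818286 ^ 9 :=
      pow_lt_pow_left₀ Real.exp_one_lt_d9 (le_of_lt (Real.exp_pos 1)) (by norm_num)
    have h3 : (2.7182818286 : ℝ) ^ 9 < 3.141592 ^ 8 := by norm_num
    have := lt_of_pow_lt_pow_left₀ 8 (by norm_num : (0:ℝ) ≤ 3.141592)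
      (by rw [h8]; exact h2.trans h3)
    exact this
  exact h1.trans Real.pi_gt_d6

lemma main_large (n : ℕ) (hn : 4 ≤ n) :
    Real.sqrt (2 * exp 1) * (((n:ℝ)+1/2)/exp 1) ^ ((n:ℝ)+1/2) <
    Real.sqrt π * (Real.sqrt (2*(n:ℝ)) * ((n:ℝ)/exp 1)^n) := by
  have h98 : (9/8 : ℝ) < Real.log π := nine_eighths_lt_log_pi
  have h916 : (9/16 : ℝ) < Real.log π / 2 := by linarith
  set x : ℝ := (n:ℝ) with hxdef
  have hx : (4:ℝ) ≤ x := by rw [hxdef]; exact_mod_cast hn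
  have hx0 : 0 < x := by linarith
  have hA : (0:ℝ) < Real.sqrt (2 * exp 1) * ((x+1/2)/exp 1) ^ (x+1/2) := by positivity
  have hB : (0:ℝ) < Real.sqrt π * (Real.sqrt (2*x) * (x/exp 1)^n) := by positivity
  rw [← Real.exp_log hA, ← Real.exp_log hB, Real.exp_lt_exp]
  have l1 : Real.log (Real.sqrt (2 * exp 1) * ((x+1/2)/exp 1) ^ (x+1/2))
      = (Real.log 2 + 1)/2 + (x+1/2)*(Real.log (x+1/2) - 1) := by
    rw [Real.log_mul (by positivity) (by positivity), Real.log_sqrt (by positivity),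
        Real.log_rpow (by positivity), Real.log_mul (by norm_num) (Real.exp_ne_zero 1),
        Real.log_exp, Real.log_div (by positivity) (Real.exp_ne_zero 1), Real.log_exp]
  have l2 : Real.log (Real.sqrt π * (Real.sqrt (2*x) * (x/exp 1)^n))
      = Real.log π / 2 + (Real.log 2 + Real.log x)/2 + x*(Real.log x - 1) := by
    rw [Real.log_mul (by positivity) (by positivity), Real.log_sqrt Real.pi_pos.le,
        Real.log_mul (by positivity) (by positivity), Real.log_sqrt (by positivity),
        Real.log_mul (by norm_num) hx0.ne', Real.log_pow,
        Real.log_div hx0.ne' (Real.exp_ne_zero 1), Real.log_exp, ← hxdef]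
    ring
  rw [l1, l2]
  have hne : (x+1/2)/x ≠ 1 := by
    intro h
    rw [div_eq_one_iff_eq hx0.ne'] at h
    linarith
  have hlog : Real.log (x+1/2) - Real.log x = Real.log ((x+1/2)/x) :=
    (Real.log_div (by positivity) hx0.ne').symm
  have hlt : Real.log ((x+1/2)/x) < (x+1/2)/x - 1 :=
    Real.log_lt_sub_one_of_pos (by positivity) hne
  have hq : (x+1/2)/x - 1 = 1/(2*x) := by field_simp; ring
  have key : (x+1/2)*(Real.log (x+1/2) - Real.log x) < 9/16 := by
    rw [hlog]
    have h1 : (x+1/2)*Real.log ((x+1/2)/x) < (x+1/2)*(1/(2*x)) :=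
      (mul_lt_mul_iff_right₀ (by linarith)).mpr (by rw [← hq]; exact hlt)
    have h2 : (x+1/2)*(1/(2*x)) ≤ 9/16 := by
      rw [mul_one_div, div_le_iff₀ (by linarith : (0:ℝ) < 2*x)]
      nlinarith
    linarith
  nlinarith [key]

lemma lhs_eq (n : ℕ) :
    Real.sqrt (2 * exp 1) * (((n:ℝ)+1/2)/exp 1) ^ ((n:ℝ)+1/2)
      = Real.sqrt (2*(n:ℝ)+1) * (((n:ℝ)+1/2)/exp 1) ^ n := by
  have ha : (0:ℝ) < ((n:ℝ)+1/2)/exp 1 := by positivity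
  rw [Real.rpow_add ha, Real.rpow_natCast, ← Real.sqrt_eq_rpow]
  rw [show Real.sqrt (2 * exp 1) * ((((n:ℝ)+1/2)/exp 1) ^ n * Real.sqrt (((n:ℝ)+1/2)/exp 1))
      = (Real.sqrt (2 * exp 1) * Real.sqrt (((n:ℝ)+1/2)/exp 1)) * (((n:ℝ)+1/2)/exp 1) ^ n by ring,
    ← Real.sqrt_mul (by positivity)]
  congr 2
  field_simp

theorem burnside_lower_weak (n : ℕ) (hn : 1 ≤ n) :
    Real.sqrt (2 * exp 1) * (((n : ℝ) + 1/2) / exp 1) ^ ((n : ℝ) + 1/2) < (n.factorial : ℝ) := by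
  rcases lt_or_ge n 4 with h4 | h4
  · have he : (2.7182818283:ℝ) < exp 1 := Real.exp_one_gt_d9
    interval_cases n
    · rw [lhs_eq]
      have hs : Real.sqrt 3 < 1.7321 := (Real.sqrt_lt' (by norm_num)).mpr (by norm_num)
      have hs0 := Real.sqrt_nonneg 3
      rw [div_pow, ← mul_div_assoc, div_lt_iff₀ (by positivity)]
      norm_num [Nat.factorial]
      nlinarith
    · rw [lhs_eq]
      have hs : Real.sqrt 5 < 2.2361 := (Real.sqrt_lt' (by norm_num)).mpr (by norm_num)
      have hs0 := Real.sqrt_nonneg 5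
      have he2 : (2.7182818283:ℝ)^2 < exp 2 := by
        rw [show (2:ℝ) = ((2:ℕ):ℝ) by norm_num, ← Real.exp_one_pow]
        exact pow_lt_pow_left₀ he (by norm_num) (by norm_num)
      rw [div_pow, ← mul_div_assoc, div_lt_iff₀ (by positivity)]
      norm_num [Nat.factorial]
      nlinarith
    · rw [lhs_eq]
      have hs : Real.sqrt 7 < 2.6458 := (Real.sqrt_lt' (by norm_num)).mpr (by norm_num)
      have hs0 := Real.sqrt_nonneg 7
      have he3 : (2.7182818283:ℝ)^3 < exp 3 := by
        rw [show (3:ℝ) = ((3:ℕ):ℝ) by norm_num, ← Real.exp_one_pow]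
        exact pow_lt_pow_left₀ he (by norm_num) (by norm_num)
      rw [div_pow, ← mul_div_assoc, div_lt_iff₀ (by positivity)]
      norm_num [Nat.factorial]
      nlinarith
  · exact lt_of_lt_of_le (main_large n h4) (factorial_ge n hn)
end

section
/- For all real t ≥ 1, ψ(t+1) < log(t + e^{−γ}), where γ is the Euler–Mascheroni constant and ψ is the digamma function. -/
open Real Filter Finset

private lemma diffF {x : ℝ} (hx : 0 < x) :
    DifferentiableAt ℝ (fun y : ℝ => Real.log (Real.Gamma y)) x := by
  have h : DifferentiableAt ℝ Real.Gamma x :=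
    Real.differentiableAt_Gamma (fun m => by
      have : (0:ℝ) ≤ m := Nat.cast_nonneg m
      intro he; rw [he] at hx; linarith)
  exact h.log (Real.Gamma_pos_of_pos hx).ne'

private lemma stepF {x : ℝ} (hx : 0 < x) :
    Real.log (Real.Gamma (x + 1)) = Real.log x + Real.log (Real.Gamma x) := by
  rw [Real.Gamma_add_one hx.ne', Real.log_mul hx.ne' (Real.Gamma_pos_of_pos hx).ne']

private lemma recF {x : ℝ} (hx : 0 < x) :
    deriv (fun y : ℝ => Real.log (Real.Gamma y)) (x + 1)
      = 1 / x + deriv (fun y : ℝ => Real.log (Real.Gamma y)) x := by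
  have h1 : deriv (fun y : ℝ => Real.log (Real.Gamma (y + 1))) x
      = deriv (fun y : ℝ => Real.log (Real.Gamma y)) (x + 1) :=
    deriv_comp_add_const (fun y : ℝ => Real.log (Real.Gamma y)) 1 x
  have heq : (fun y : ℝ => Real.log (Real.Gamma (y + 1)))
      =ᶠ[nhds x] (fun y : ℝ => Real.log y + Real.log (Real.Gamma y)) := by
    filter_upwards [eventually_gt_nhds hx] with y hy
    exact stepF hy
  have h2 : deriv (fun y : ℝ => Real.log (Real.Gamma (y + 1))) x
      = deriv (fun y : ℝ => Real.log y + Real.log (Real.Gamma y)) x := heq.deriv_eq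
  have h3 : deriv (fun y : ℝ => Real.log y + Real.log (Real.Gamma y)) x
      = 1 / x + deriv (fun y : ℝ => Real.log (Real.Gamma y)) x := by
    rw [deriv_fun_add (Real.differentiableAt_log hx.ne') (diffF hx), Real.deriv_log, one_div]
  rw [← h1, h2, h3]

private lemma upperF {x : ℝ} (hx : 0 < x) :
    deriv (fun y : ℝ => Real.log (Real.Gamma y)) x ≤ Real.log x := by
  have h := Real.convexOn_log_Gamma.deriv_le_slope (Set.mem_Ioi.mpr hx)
    (Set.mem_Ioi.mpr (by linarith : (0:ℝ) < x + 1)) (by linarith) (diffF hx)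
  have hs : slope (Real.log ∘ Real.Gamma) x (x + 1) = Real.log x := by
    rw [slope_def_field]
    simp only [Function.comp_apply]
    rw [stepF hx]
    ring
  rw [hs] at h
  exact h

private lemma shiftF {t : ℝ} (ht : 0 < t) (N : ℕ) :
    deriv (fun y : ℝ => Real.log (Real.Gamma y)) (t + 1 + N)
      = deriv (fun y : ℝ => Real.log (Real.Gamma y)) (t + 1)
        + ∑ k ∈ Finset.range N, 1 / (t + 1 + k) := by
  induction N with
  | zero => simp
  | succ n ih =>
    have h : (t + 1 + (n+1:ℕ) : ℝ) = (t + 1 + n) + 1 := by push_cast; ring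
    rw [h, recF (by positivity), ih, Finset.sum_range_succ]
    ring

private lemma perterm {x c : ℝ} (hx : 2 ≤ x) (hc : 109/200 ≤ c) :
    Real.log (x + c) - Real.log (x + c - 1) < 1 / x := by
  have h1 : (0:ℝ) < x + c - 1 := by linarith
  have h2 : (0:ℝ) < x + c := by linarith
  have hx0 : (0:ℝ) < x := by linarith
  rw [← Real.log_div h2.ne' h1.ne']
  rw [Real.log_lt_iff_lt_exp (by positivity)]
  have hexp : ∑ i ∈ Finset.range 5, (1/x) ^ i / (Nat.factorial i) ≤ Real.exp (1/x) :=
    Real.sum_le_exp_of_nonneg (by positivity) 5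
  refine lt_of_lt_of_le ?_ hexp
  have hsum : ∑ i ∈ Finset.range 5, (1/x) ^ i / (Nat.factorial i)
      = 1 + 1/x + 1/(2*x^2) + 1/(6*x^3) + 1/(24*x^4) := by
    simp [Finset.sum_range_succ, Nat.factorial]
    field_simp
  rw [hsum, div_lt_iff₀ h1]
  have h3 : (0:ℝ) < x^4 := by positivity
  rw [show (1 + 1/x + 1/(2*x^2) + 1/(6*x^3) + 1/(24*x^4)) * (x + c - 1)
      = ((24*x^4 + 24*x^3 + 12*x^2 + 4*x + 1) * (x + c - 1)) / (24*x^4) by field_simp; ring,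
    lt_div_iff₀ (by positivity)]
  nlinarith [sq_nonneg x, sq_nonneg (x-2), mul_pos hx0 hx0, pow_pos hx0 3, pow_pos hx0 4,
    mul_nonneg (sub_nonneg.mpr hx) (pow_pos hx0 3).le,
    mul_nonneg (sub_nonneg.mpr hc) (pow_pos hx0 3).le]

private lemma harmonic_ge_log (n : ℕ) :
    Real.log (n + 1) ≤ ∑ k ∈ Finset.range n, (1:ℝ)/(k+1) := by
  induction n with
  | zero => simp
  | succ n ih =>
    rw [Finset.sum_range_succ]
    have h : Real.log ((n:ℝ) + 1 + 1) - Real.log ((n:ℝ) + 1) ≤ 1/((n:ℝ)+1) := by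
      have hp : (0:ℝ) < (n:ℝ) + 1 := by positivity
      rw [← Real.log_div (by positivity) hp.ne']
      have := Real.log_le_sub_one_of_pos (show (0:ℝ) < ((n:ℝ)+1+1)/((n:ℝ)+1) by positivity)
      have e : ((n:ℝ)+1+1)/((n:ℝ)+1) - 1 = 1/((n:ℝ)+1) := by field_simp; ring
      linarith
    push_cast
    linarith

private lemma seq_antitone {n : ℕ} (hn : 1 ≤ n) :
    (∑ k ∈ Finset.range (n+1), (1:ℝ)/(k+1)) - Real.log (n+1)
      ≤ (∑ k ∈ Finset.range n, (1:ℝ)/(k+1)) - Real.log n := by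
  rw [Finset.sum_range_succ]
  have hp : (0:ℝ) < n := by exact_mod_cast hn
  have h : 1/((n:ℝ)+1) ≤ Real.log ((n:ℝ)+1) - Real.log n := by
    have := Real.log_le_sub_one_of_pos (show (0:ℝ) < (n:ℝ)/((n:ℝ)+1) by positivity)
    rw [Real.log_div hp.ne' (by positivity)] at this
    have e : (n:ℝ)/((n:ℝ)+1) - 1 = -(1/((n:ℝ)+1)) := by field_simp; ring
    linarith
  linarith

private lemma gamma_bounds (γ : ℝ)
    (hγ : Tendsto (fun n : ℕ => (∑ k ∈ Finset.range n, (1:ℝ)/(k+1)) - Real.log n)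
      atTop (nhds γ)) :
    0 ≤ γ ∧ γ ≤ (0.5851 : ℝ) := by
  constructor
  · refine ge_of_tendsto hγ (Eventually.of_forall fun n => ?_)
    have h1 := harmonic_ge_log n
    have h2 : Real.log n ≤ Real.log (n+1) := by
      rcases Nat.eq_zero_or_pos n with h | h
      · simp [h]
      · exact Real.log_le_log (by exact_mod_cast h) (by linarith)
    linarith
  · have key : γ ≤ (∑ k ∈ Finset.range 64, (1:ℝ)/(k+1)) - Real.log 64 := by
      refine le_of_tendsto hγ ?_
      rw [eventually_atTop]
      refine ⟨64, fun n hn => ?_⟩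
      induction n with
      | zero => omega
      | succ m ih =>
        rcases Nat.lt_or_ge m 64 with h | h
        · have : m + 1 = 64 := by omega
          rw [this]
          push_cast
          exact le_rfl
        · have := ih h
          have step := seq_antitone (show 1 ≤ m by omega)
          push_cast at step ⊢
          linarith
    have hlog : Real.log (64:ℝ) = 6 * Real.log 2 := by
      rw [show (64:ℝ) = 2^6 by norm_num, Real.log_pow]
      norm_num
    have h2 : (0.6931471803 : ℝ) < Real.log 2 := Real.log_two_gt_d9
    have hH : (∑ k ∈ Finset.range 64, (1:ℝ)/(k+1)) ≤ 4.7439830818 := by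
      simp [Finset.sum_range_succ]
      norm_num
    rw [hlog] at key
    linarith

private lemma exp_neg_gamma_ge {γ : ℝ} (h0 : 0 ≤ γ) (h1 : γ ≤ (0.5851:ℝ)) :
    (109/200 : ℝ) ≤ Real.exp (-γ) ∧ Real.exp (-γ) ≤ 1 := by
  constructor
  · have he : Real.exp (0.5851:ℝ) ≤ 200/109 := by
      have hb := Real.exp_bound' (show (0:ℝ) ≤ 0.5851 by norm_num)
        (show (0.5851:ℝ) ≤ 1 by norm_num) (show 0 < 7 by norm_num)
      refine hb.trans ?_
      simp [Finset.sum_range_succ, Nat.factorial]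
      norm_num
    have h2 : Real.exp γ ≤ 200/109 := (Real.exp_le_exp.mpr h1).trans he
    rw [Real.exp_neg]
    rw [le_inv_comm₀ (by norm_num) (Real.exp_pos _)]
    calc Real.exp γ ≤ 200/109 := h2
      _ ≤ (109/200:ℝ)⁻¹ := by norm_num
  · rw [Real.exp_le_one_iff]; linarith

theorem digamma_lt_log (γ : ℝ)
    (hγ : Tendsto (fun n : ℕ => (∑ k ∈ Finset.range n, (1:ℝ)/(k+1)) - Real.log n)
      atTop (nhds γ))
    (t : ℝ) (ht : 1 ≤ t) :
    deriv (fun x : ℝ => Real.log (Real.Gamma x)) (t + 1) < Real.log (t + exp (-γ)) := by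
  obtain ⟨hγ0, hγ1⟩ := gamma_bounds γ hγ
  obtain ⟨hc1, hc2⟩ := exp_neg_gamma_ge hγ0 hγ1
  set c : ℝ := Real.exp (-γ) with hcdef
  have ht0 : (0:ℝ) < t := by linarith
  have htc : (0:ℝ) < t + c := by linarith
  set g : ℕ → ℝ := fun k => Real.log (t + k + c) with hgdef
  have hg0 : g 0 = Real.log (t + c) := by simp [hgdef]
  have hg1 : g 1 = Real.log (t + 1 + c) := by simp [hgdef]
  -- per-term bound
  have hterm : ∀ k : ℕ, g (k+1) - g k < 1 / (t + 1 + k) := by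
    intro k
    have h := perterm (x := t + 1 + k) (c := c)
      (by have : (0:ℝ) ≤ k := Nat.cast_nonneg k; linarith) hc1
    have e1 : t + 1 + (k:ℝ) + c - 1 = t + (k:ℝ) + c := by ring
    have e2 : t + 1 + (k:ℝ) + c = t + ((k:ℕ)+1:ℕ) + c := by push_cast; ring
    rw [e1, e2] at h
    exact h
  -- the first-term gap
  have hfirst : g 1 - g 0 < 1 / (t + 1) := by
    have := hterm 0
    simpa using this
  set ε : ℝ := 1 / (t + 1) - (g 1 - g 0) with hεdef
  have hε : 0 < ε := by simp only [hεdef]; linarith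
  obtain ⟨n, hn⟩ := exists_nat_one_div_lt hε
  set N : ℕ := n + 2 with hNdef
  -- telescoping sum bound: S_N ≥ ε + g N - g 0
  have hsum : ε + (g N - g 0) ≤ ∑ k ∈ Finset.range N, 1 / (t + 1 + k) := by
    have hsplit : ∑ k ∈ Finset.range N, 1 / (t + 1 + (k:ℕ))
        = (∑ k ∈ Finset.range (n+1), 1 / (t + 1 + ((k+1:ℕ)))) + 1 / (t + 1 + (0:ℕ)) :=
      Finset.sum_range_succ' _ _
    have htail : ∑ k ∈ Finset.range (n+1), (g (k+2) - g (k+1))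
        ≤ ∑ k ∈ Finset.range (n+1), 1 / (t + 1 + ((k+1:ℕ))) :=
      Finset.sum_le_sum fun k _ => (hterm (k+1)).le
    have htel : ∑ k ∈ Finset.range (n+1), (g (k+2) - g (k+1)) = g (n+2) - g 1 :=
      Finset.sum_range_sub (fun k => g (k+1)) (n+1)
    have hfirstterm : 1 / (t + 1 + ((0:ℕ):ℝ)) = ε + (g 1 - g 0) := by
      simp only [hεdef]; push_cast; ring
    rw [hsplit, hfirstterm]
    have hNe : g N = g (n+2) := rfl
    rw [hNe]
    linarith [htel ▸ htail]
  -- main chain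
  have hshift := shiftF ht0 N
  have hupper := upperF (show (0:ℝ) < t + 1 + N by positivity)
  -- log(t+1+N) - g N ≤ 1/(n+1)
  have hlogdiff : Real.log (t + 1 + N) - g N ≤ 1 / (n + 1) := by
    have hp : (0:ℝ) < t + N + c := by positivity
    have hq : (0:ℝ) < t + 1 + N := by positivity
    have hgN : g N = Real.log (t + N + c) := rfl
    rw [hgN, ← Real.log_div hq.ne' hp.ne']
    have hlt := Real.log_le_sub_one_of_pos (show (0:ℝ) < (t+1+N)/(t+N+c) by positivity)
    have e : (t+1+(N:ℝ))/(t+(N:ℝ)+c) - 1 = (1 - c)/(t+(N:ℝ)+c) := by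
      field_simp
      ring
    rw [e] at hlt
    refine hlt.trans ?_
    rw [div_le_div_iff₀ hp (by positivity)]
    have hNn : ((n:ℝ)+1) ≤ (N:ℝ) := by rw [hNdef]; push_cast; linarith
    nlinarith [Nat.cast_nonneg (α := ℝ) n, Nat.cast_nonneg (α := ℝ) N]
  have hgoal : Real.log (t + exp (-γ)) = g 0 := by rw [hg0]
  rw [hgoal]
  have h0 : deriv (fun x : ℝ => Real.log (Real.Gamma x)) (t + 1)
      = deriv (fun y : ℝ => Real.log (Real.Gamma y)) (t + 1 + N)
        - ∑ k ∈ Finset.range N, 1 / (t + 1 + k) := by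
    rw [hshift]; ring
  rw [h0]
  have h1 : 1/((n:ℝ)+1) - ε < 0 := by linarith
  calc deriv (fun y : ℝ => Real.log (Real.Gamma y)) (t + 1 + N)
        - ∑ k ∈ Finset.range N, 1 / (t + 1 + k)
      ≤ Real.log (t + 1 + N) - (ε + (g N - g 0)) := by linarith
    _ ≤ 1/((n:ℝ)+1) - ε + g 0 := by linarith
    _ < g 0 := by linarith
end

section
/- For all natural numbers n ≥ 1, n! < e^{(1+γ)e^{−γ}} · ((n + e^{−γ})/e)^{n + e^{−γ}}, where γ is the Euler–Mascheroni constant. -/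
open Real Filter Finset


lemma cubic_le_exp {t : ℝ} (h : 0 ≤ t) : 1 + t + t^2/2 + t^3/6 ≤ exp t := by
  have := Real.sum_le_exp_of_nonneg h 4
  simp only [Finset.sum_range_succ, Finset.sum_range_zero, Nat.factorial] at this
  norm_num at this
  nlinarith [this]

lemma pade_exp {t : ℝ} (h0 : 0 ≤ t) (h2 : t < 2) : exp t ≤ (2 + t) / (2 - t) := by
  have hder : ∀ x : ℝ, HasDerivAt (fun x : ℝ => (2 + x) * exp (-x) - (2 - x))
      (1 - (1 + x) * exp (-x)) x := by
    intro x
    have h1 : HasDerivAt (fun x : ℝ => exp (-x)) (exp (-x) * (-1)) x :=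
      (Real.hasDerivAt_exp (-x)).comp x (hasDerivAt_neg x)
    have h2 : HasDerivAt (fun x : ℝ => (2 + x) * exp (-x))
        (1 * exp (-x) + (2 + x) * (exp (-x) * (-1))) x :=
      ((hasDerivAt_id x).const_add 2).mul h1
    have h3 : HasDerivAt (fun x : ℝ => 2 - x) (-1) x := by
      simpa using (hasDerivAt_id x).const_sub 2
    have := h2.sub h3
    refine this.congr_deriv ?_
    ring
  have hmono : MonotoneOn (fun x : ℝ => (2 + x) * exp (-x) - (2 - x)) (Set.Ici 0) := by
    apply monotoneOn_of_deriv_nonneg (convex_Ici 0)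
    · exact fun x _ => ((hder x).continuousAt).continuousWithinAt
    · exact fun x _ => ((hder x).differentiableAt).differentiableWithinAt
    · intro x hx
      rw [(hder x).deriv]
      rw [interior_Ici] at hx
      have hx' : (0:ℝ) < x := hx
      have h1x : 1 + x ≤ exp x := by linarith [Real.add_one_le_exp x]
      have hep : (0:ℝ) < exp (-x) := exp_pos _
      have : (1 + x) * exp (-x) ≤ exp x * exp (-x) := by nlinarith
      rw [← Real.exp_add] at this
      simp at this
      linarith
  have h0' := hmono (Set.self_mem_Ici) (Set.mem_Ici.2 h0) h0
  simp at h0'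
  have hpos : (0:ℝ) < 2 - t := by linarith
  rw [le_div_iff₀ hpos]
  have hprod : exp t * exp (-t) = 1 := by rw [← Real.exp_add]; simp
  nlinarith [exp_pos t, exp_pos (-t)]

lemma exp_up_0349 : exp (2756/7875) ≤ 1.419023 := by
  have h := Real.exp_bound' (x := 2756/7875) (by norm_num) (by norm_num) (n := 6) (by norm_num)
  simp only [Finset.sum_range_succ, Finset.sum_range_zero] at h
  norm_num [Nat.factorial] at h
  linarith

lemma exp_lo_0303 : (1.35520 : ℝ) ≤ exp (383/1260) := by
  have h := Real.sum_le_exp_of_nonneg (x := 383/1260) (by norm_num) 5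
  simp only [Finset.sum_range_succ, Finset.sum_range_zero] at h
  norm_num [Nat.factorial] at h
  linarith

lemma exp_up_0579 : exp (579/1000) ≤ 1.784255 := by
  have h := Real.exp_bound' (x := 579/1000) (by norm_num) (by norm_num) (n := 7) (by norm_num)
  simp only [Finset.sum_range_succ, Finset.sum_range_zero] at h
  norm_num [Nat.factorial] at h
  linarith

lemma exp_lo_0575 : (1.77712 : ℝ) ≤ exp (575/1000) := by
  have h := Real.sum_le_exp_of_nonneg (x := 575/1000) (by norm_num) 8
  simp only [Finset.sum_range_succ, Finset.sum_range_zero] at h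
  norm_num [Nat.factorial] at h
  linarith

lemma exp_up_0443 : exp (4443/10000) ≤ 1.55941 := by
  have h := Real.exp_bound' (x := 4443/10000) (by norm_num) (by norm_num) (n := 7) (by norm_num)
  simp only [Finset.sum_range_succ, Finset.sum_range_zero] at h
  norm_num [Nat.factorial] at h
  linarith

lemma exp_q_le : exp (18506/7875) ≤ 21/2 := by
  have h1 : (18506/7875 : ℝ) = 1 + 1 + 2756/7875 := by norm_num
  rw [h1, Real.exp_add, Real.exp_add]
  calc exp 1 * exp 1 * exp (2756/7875)
      ≤ 2.7182818286 * 2.7182818286 * 1.419023 := by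
        gcongr <;> first | exact Real.exp_one_lt_d9.le | exact exp_up_0349
    _ ≤ 21/2 := by norm_num

lemma exp_p_ge : (10:ℝ) ≤ exp (2903/1260) := by
  have h1 : (2903/1260 : ℝ) = 1 + 1 + 383/1260 := by norm_num
  rw [h1, Real.exp_add, Real.exp_add]
  calc (10:ℝ) ≤ 2.7182818283 * 2.7182818283 * 1.35520 := by norm_num
    _ ≤ exp 1 * exp 1 * exp (383/1260) := by
        gcongr <;> first | exact Real.exp_one_gt_d9.le | exact exp_lo_0303


noncomputable def Afun : ℝ → ℝ := fun x => (x+1)*log (x+1) - x*log x - 1 - log (x+11/25)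

lemma Afun_deriv {x : ℝ} (hx : 1 < x) :
    HasDerivAt Afun (log (x+1) - log x - 1/(x+11/25)) x := by
  have hx0 : x ≠ 0 := by linarith
  have hx1 : x + 1 ≠ 0 := by linarith
  have hx2 : x + 11/25 ≠ 0 := by linarith
  have p1 : HasDerivAt (fun x : ℝ => (x+1)*log (x+1))
      (1 * log (x+1) + (x+1) * ((x+1)⁻¹ * 1)) x := by
    have h1 : HasDerivAt (fun x : ℝ => x + 1) 1 x := (hasDerivAt_id x).add_const 1
    exact h1.mul ((Real.hasDerivAt_log hx1).comp (h := fun x : ℝ => x + 1) x h1)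
  have p2 : HasDerivAt (fun x : ℝ => x*log x) (1 * log x + x * x⁻¹) x :=
    (hasDerivAt_id x).mul (Real.hasDerivAt_log hx0)
  have p3 : HasDerivAt (fun x : ℝ => log (x+11/25)) ((x+11/25)⁻¹ * 1) x :=
    (Real.hasDerivAt_log hx2).comp (h := fun x : ℝ => id x + 11/25) x ((hasDerivAt_id x).add_const (11/25))
  have := ((p1.sub p2).sub_const 1).sub p3
  refine this.congr_deriv ?_
  field_simp
  ring

lemma Afun_anti : AntitoneOn Afun (Set.Ici (3/2 : ℝ)) := by
  have hmem : ∀ x : ℝ, x ∈ Set.Ici (3/2 : ℝ) → 1 < x := fun x hx => by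
    have : (3/2:ℝ) ≤ x := hx
    linarith
  apply antitoneOn_of_deriv_nonpos (convex_Ici _)
  · exact fun x hx => ((Afun_deriv (hmem x hx)).continuousAt).continuousWithinAt
  · rw [interior_Ici]
    exact fun x hx =>
      (Afun_deriv (by have : (3/2:ℝ) < x := hx; linarith)).differentiableAt.differentiableWithinAt
  · intro x hx
    rw [interior_Ici] at hx
    have hx32 : (3/2:ℝ) < x := hx
    have hx1 : (1:ℝ) < x := by linarith
    rw [(Afun_deriv hx1).deriv]
    set u : ℝ := x + 11/25 with hu
    have hu0 : (0:ℝ) < u := by rw [hu]; linarith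
    have hu194 : (97/50:ℝ) ≤ u := by rw [hu]; linarith
    set t : ℝ := 1/u with htdef
    have ht0 : 0 ≤ t := by positivity
    have key : 1 + t + t^2/2 + t^3/6 - (x+1)/x = (9*u^2 - 8*u - 11)/(150*u^3*x) := by
      rw [htdef, hu]
      field_simp
      ring
    have hnum : (0:ℝ) ≤ 9*u^2 - 8*u - 11 := by
      rw [hu]
      nlinarith [hx32, sq_nonneg (x - 3/2)]
    have hfrac : (0:ℝ) ≤ (9*u^2 - 8*u - 11)/(150*u^3*x) := by positivity
    have hrat : (x+1)/x ≤ 1 + t + t^2/2 + t^3/6 := by linarith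
    have hexp := le_trans hrat (cubic_le_exp ht0)
    have hlog : log ((x+1)/x) ≤ t :=
      (Real.log_le_iff_le_exp (by positivity)).2 hexp
    rw [Real.log_div (by linarith) (by linarith)] at hlog
    rw [htdef] at hlog
    linarith

lemma tendsto_aux_ratio : Tendsto (fun x : ℝ => x*(log (x+1) - log x)) atTop (nhds 1) := by
  have hlow : ∀ᶠ x : ℝ in atTop, 1 - 1/(2*x+1) ≤ x*(log (x+1) - log x) := by
    filter_upwards [eventually_ge_atTop (1:ℝ)] with x hx
    have hx0 : (0:ℝ) < x := by linarith
    have ht0 : (0:ℝ) ≤ 2/(2*x+1) := by positivity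
    have ht2 : 2/(2*x+1) < 2 := by
      rw [div_lt_iff₀ (by linarith)]; nlinarith
    have hp := pade_exp ht0 ht2
    have heq : (2 + 2/(2*x+1)) / (2 - 2/(2*x+1)) = (x+1)/x := by
      rw [div_eq_div_iff (ne_of_gt (by linarith : (0:ℝ) < 2 - 2/(2*x+1))) (ne_of_gt hx0)]
      field_simp
      ring
    rw [heq] at hp
    have hlog : 2/(2*x+1) ≤ log ((x+1)/x) :=
      (Real.le_log_iff_exp_le (by positivity)).2 hp
    rw [Real.log_div (by linarith) (by linarith)] at hlog
    have h2 : x * (2/(2*x+1)) ≤ x * (log (x+1) - log x) :=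
      mul_le_mul_of_nonneg_left hlog hx0.le
    have h3 : x * (2/(2*x+1)) = 1 - 1/(2*x+1) := by
      field_simp
      ring
    linarith
  have hhigh : ∀ᶠ x : ℝ in atTop, x*(log (x+1) - log x) ≤ 1 := by
    filter_upwards [eventually_ge_atTop (1:ℝ)] with x hx
    have hx0 : (0:ℝ) < x := by linarith
    have hpos : (0:ℝ) < (x+1)/x := by positivity
    have h1 := Real.log_le_sub_one_of_pos hpos
    rw [Real.log_div (by linarith) (by linarith)] at h1
    have h2 : (x+1)/x - 1 = 1/x := by field_simp; ring
    have h3 : x * (log (x+1) - log x) ≤ x * (1/x) := by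
      apply mul_le_mul_of_nonneg_left _ hx0.le
      linarith
    have h4 : x * (1/x) = 1 := by field_simp
    linarith
  have hl : Tendsto (fun x : ℝ => 1 - 1/(2*x+1)) atTop (nhds 1) := by
    have h1 : Tendsto (fun x : ℝ => 2*x+1) atTop atTop :=
      tendsto_atTop_add_const_right _ 1 (tendsto_id.const_mul_atTop (by norm_num))
    have h2 : Tendsto (fun x : ℝ => 1/(2*x+1)) atTop (nhds 0) := by
      simpa [one_div, Function.comp_def] using tendsto_inv_atTop_zero.comp h1
    have := (tendsto_const_nhds : Tendsto (fun _ : ℝ => (1:ℝ)) atTop (nhds 1)).sub h2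
    simpa using this
  exact tendsto_of_tendsto_of_tendsto_of_le_of_le' hl tendsto_const_nhds hlow hhigh

lemma tendsto_aux_shift : Tendsto (fun x : ℝ => log (x+1) - log (x+11/25)) atTop (nhds 0) := by
  have hup : Tendsto (fun x : ℝ => (14/25)/(x+11/25)) atTop (nhds 0) := by
    have h1 : Tendsto (fun x : ℝ => x+11/25) atTop atTop :=
      tendsto_atTop_add_const_right _ _ tendsto_id
    have h2 : Tendsto (fun x : ℝ => (x+11/25)⁻¹) atTop (nhds 0) :=
      tendsto_inv_atTop_zero.comp h1
    have := h2.const_mul (14/25 : ℝ)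
    simpa [div_eq_mul_inv] using this
  apply tendsto_of_tendsto_of_tendsto_of_le_of_le' tendsto_const_nhds hup
  · filter_upwards [eventually_ge_atTop (1:ℝ)] with x hx
    have := Real.log_le_log (by linarith : (0:ℝ) < x + 11/25) (by linarith : x + 11/25 ≤ x + 1)
    linarith
  · filter_upwards [eventually_ge_atTop (1:ℝ)] with x hx
    have hpos : (0:ℝ) < (x+1)/(x+11/25) := by positivity
    have h1 := Real.log_le_sub_one_of_pos hpos
    rw [Real.log_div (by linarith) (by linarith)] at h1
    have h2 : (x+1)/(x+11/25) - 1 = (14/25)/(x+11/25) := by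
      field_simp
      ring
    linarith

lemma Afun_tendsto : Tendsto Afun atTop (nhds 0) := by
  have h := (tendsto_aux_ratio.sub (tendsto_const_nhds : Tendsto (fun _ : ℝ => (1:ℝ)) atTop (nhds 1))).add tendsto_aux_shift
  rw [show (1:ℝ) - 1 + 0 = 0 by norm_num] at h
  refine Tendsto.congr (fun x => ?_) h
  simp only [Afun]
  ring

lemma logA {x : ℝ} (hx : 3/2 ≤ x) :
    log (x + 11/25) ≤ (x+1)*log (x+1) - x*log x - 1 := by
  have h0 : (0:ℝ) ≤ Afun x := by
    refine le_of_tendsto Afun_tendsto ?_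
    filter_upwards [eventually_ge_atTop x] with y hy
    exact Afun_anti (Set.mem_Ici.2 hx) (Set.mem_Ici.2 (le_trans hx hy)) hy
  simp only [Afun] at h0
  linarith


lemma tendsto_half_inv : Tendsto (fun n : ℕ => 1/(2*(n:ℝ))) atTop (nhds 0) := by
  have h := (tendsto_one_div_atTop_nhds_zero_nat (𝕜 := ℝ)).div_const 2
  rw [show (0:ℝ)/2 = 0 by norm_num] at h
  convert h using 2 with n
  ring

lemma gamma_le (γ : ℝ)
    (hγ : Tendsto (fun n : ℕ => (∑ k ∈ Finset.range n, (1:ℝ)/(k+1)) - Real.log n)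
      atTop (nhds γ)) : γ ≤ 579/1000 := by
  set H : ℕ → ℝ := fun n => ∑ k ∈ Finset.range n, (1:ℝ)/(k+1) with hH
  set v : ℕ → ℝ := fun n => H n - log ((n:ℝ) + 1/2) with hv
  have hstep : ∀ n : ℕ, v (n+1) ≤ v n := by
    intro n
    set x : ℝ := (n:ℝ) with hx
    have hx0 : (0:ℝ) ≤ x := Nat.cast_nonneg n
    have hH1 : H (n+1) = H n + 1/(x+1) := by
      simp [hH, Finset.sum_range_succ, hx]
    have ht0 : (0:ℝ) ≤ 1/(x+1) := by positivity
    have ht2 : (1:ℝ)/(x+1) < 2 := by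
      rw [div_lt_iff₀ (by linarith)]; linarith
    have hp := pade_exp ht0 ht2
    have heq : (2 + 1/(x+1)) / (2 - 1/(x+1)) = (x + 3/2)/(x + 1/2) := by
      rw [div_eq_div_iff (by linarith) (by positivity)]
      field_simp
      ring
    rw [heq] at hp
    have hlog : 1/(x+1) ≤ log ((x + 3/2)/(x + 1/2)) :=
      (Real.le_log_iff_exp_le (by positivity)).2 hp
    rw [Real.log_div (by positivity) (by positivity)] at hlog
    have hcast : ((n+1:ℕ):ℝ) + 1/2 = x + 3/2 := by push_cast; ring
    simp only [hv, hH1, hcast]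
    linarith
  have hanti : Antitone v := antitone_nat_of_succ_le hstep
  have hw : Tendsto (fun n : ℕ => log ((n:ℝ) + 1/2) - log (n:ℝ)) atTop (nhds 0) := by
    apply tendsto_of_tendsto_of_tendsto_of_le_of_le' tendsto_const_nhds tendsto_half_inv
    · filter_upwards [eventually_ge_atTop 1] with n hn
      have hn' : (1:ℝ) ≤ (n:ℝ) := by exact_mod_cast hn
      have := Real.log_le_log (by linarith) (by linarith : (n:ℝ) ≤ (n:ℝ) + 1/2)
      linarith
    · filter_upwards [eventually_ge_atTop 1] with n hn
      have hn' : (1:ℝ) ≤ (n:ℝ) := by exact_mod_cast hn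
      have hpos : (0:ℝ) < ((n:ℝ) + 1/2)/(n:ℝ) := by positivity
      have h1 := Real.log_le_sub_one_of_pos hpos
      rw [Real.log_div (by linarith) (by linarith)] at h1
      have : ((n:ℝ) + 1/2)/(n:ℝ) - 1 = 1/(2*(n:ℝ)) := by
        field_simp
        ring
      linarith [this ▸ h1]
  have hvt : Tendsto v atTop (nhds γ) := by
    have := hγ.sub hw
    rw [sub_zero] at this
    refine Tendsto.congr (fun n => ?_) this
    simp only [hv, hH]
    ring
  have hγle : γ ≤ v 10 :=
    le_of_tendsto hvt (eventually_atTop.2 ⟨10, fun m hm => hanti hm⟩)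
  have hv10 : v 10 = 7381/2520 - log (21/2) := by
    have : H 10 = 7381/2520 := by
      simp [hH, Finset.sum_range_succ]
      norm_num
    simp [hv, this]
    norm_num
  have hlog21 : (18506/7875 : ℝ) ≤ log (21/2) :=
    (Real.le_log_iff_exp_le (by norm_num)).2 exp_q_le
  rw [hv10] at hγle
  have : (7381/2520 : ℝ) - 18506/7875 = 579/1000 := by norm_num
  linarith

lemma gamma_ge (γ : ℝ)
    (hγ : Tendsto (fun n : ℕ => (∑ k ∈ Finset.range n, (1:ℝ)/(k+1)) - Real.log n)
      atTop (nhds γ)) : 575/1000 ≤ γ := by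
  set H : ℕ → ℝ := fun n => ∑ k ∈ Finset.range n, (1:ℝ)/(k+1) with hH
  set a : ℕ → ℝ := fun n => H n - log ((n:ℝ)) - 1/(2*(n:ℝ)) with ha
  have hstep : ∀ n : ℕ, 1 ≤ n → a n ≤ a (n+1) := by
    intro n hn
    set x : ℝ := (n:ℝ) with hx
    have hx1 : (1:ℝ) ≤ x := by rw [hx]; exact_mod_cast hn
    have hx0 : (0:ℝ) < x := by linarith
    set t : ℝ := (2*x+1)/(2*x*(x+1)) with htdef
    have ht0 : 0 ≤ t := by positivity
    have hrat : (x+1)/x ≤ 1 + t + t^2/2 + t^3/6 := by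
      have key : 1 + t + t^2/2 - (x+1)/x = 1/(8*x^2*(x+1)^2) := by
        rw [htdef]; field_simp; ring
      have hpos : (0:ℝ) < 1/(8*x^2*(x+1)^2) := by positivity
      have ht3 : (0:ℝ) ≤ t^3/6 := by positivity
      linarith
    have hexp := le_trans hrat (cubic_le_exp ht0)
    have hlog : log ((x+1)/x) ≤ t :=
      (Real.log_le_iff_le_exp (by positivity)).2 hexp
    rw [Real.log_div (by positivity) (by positivity)] at hlog
    have hteq : t = 1/(x+1) + 1/(2*x) - 1/(2*(x+1)) := by
      rw [htdef]; field_simp; ring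
    have hH1 : H (n+1) = H n + 1/(x+1) := by
      simp [hH, Finset.sum_range_succ, hx]
    have hcast : ((n+1:ℕ):ℝ) = x + 1 := by push_cast; ring
    simp only [ha, hH1, hcast]
    rw [hteq] at hlog
    linarith
  have hmono : ∀ m, 10 ≤ m → a 10 ≤ a m := by
    intro m hm
    induction m, hm using Nat.le_induction with
    | base => exact le_rfl
    | succ m hm ih => exact le_trans ih (hstep m (by omega))
  have hat : Tendsto a atTop (nhds γ) := by
    have := hγ.sub tendsto_half_inv
    rw [sub_zero] at this
    refine Tendsto.congr (fun n => ?_) this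
    simp only [ha, hH]
  have hγge : a 10 ≤ γ :=
    ge_of_tendsto hat (eventually_atTop.2 ⟨10, fun m hm => hmono m hm⟩)
  have ha10 : a 10 = 7381/2520 - log 10 - 1/20 := by
    have : H 10 = 7381/2520 := by
      simp [hH, Finset.sum_range_succ]
      norm_num
    simp [ha, this]
    norm_num
  have hlog10 : log 10 ≤ 2903/1260 :=
    (Real.log_le_iff_le_exp (by norm_num)).2 exp_p_ge
  rw [ha10] at hγge
  have : (7381/2520 : ℝ) - 2903/1260 - 1/20 = 575/1000 := by norm_num
  linarith
theorem burnside_upper_gamma_const (γ : ℝ)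
    (hγ : Tendsto (fun n : ℕ => (∑ k ∈ Finset.range n, (1:ℝ)/(k+1)) - Real.log n)
      atTop (nhds γ))
    (n : ℕ) (hn : 1 ≤ n) :
    (n.factorial : ℝ) < exp ((1 + γ) * exp (-γ)) * (((n : ℝ) + exp (-γ)) / exp 1) ^ ((n : ℝ) + exp (-γ)) := by
  have hγ1 : 575/1000 ≤ γ := gamma_ge γ hγ
  have hγ2 : γ ≤ 579/1000 := gamma_le γ hγ
  set c : ℝ := exp (-γ) with hc
  have hcpos : 0 < c := exp_pos _
  have hprod : c * exp γ = 1 := by rw [hc, ← Real.exp_add]; simp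
  have hc_lo : 5602/10000 ≤ c := by
    have h1 : exp γ ≤ 1.784255 := le_trans (exp_le_exp.2 hγ2) exp_up_0579
    nlinarith [exp_pos γ]
  have hc_hi : c ≤ 5630/10000 := by
    have h1 : (1.77712:ℝ) ≤ exp γ := le_trans exp_lo_0575 (exp_le_exp.2 hγ1)
    nlinarith [exp_pos γ]
  have hL : (4443/10000 : ℝ) ≤ log (1+c) := by
    apply (Real.le_log_iff_exp_le (by linarith)).2
    exact le_trans exp_up_0443 (by norm_num; linarith)
  have key : ∀ m : ℕ, 1 ≤ m →
      Real.log m.factorial < (1+γ)*c + ((m:ℝ)+c)*(log ((m:ℝ)+c) - 1) := by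
    intro m hm
    induction m, hm using Nat.le_induction with
    | base =>
      simp only [Nat.factorial_one, Nat.cast_one, Real.log_one]
      nlinarith [mul_nonneg (by linarith : (0:ℝ) ≤ γ - 575/1000) (by linarith : (0:ℝ) ≤ c - 5602/10000),
        mul_nonneg (by linarith : (0:ℝ) ≤ c - 5602/10000) (by linarith : (0:ℝ) ≤ log (1+c) - 4443/10000)]
    | succ m hm ih =>
      have hm1 : (1:ℝ) ≤ (m:ℝ) := by exact_mod_cast hm
      set x : ℝ := (m:ℝ) + c with hx
      clear_value x
      have hx32 : (3/2:ℝ) ≤ x := by rw [hx]; linarith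
      have hfac : ((m+1).factorial : ℝ) = ((m:ℝ)+1) * (m.factorial : ℝ) := by
        rw [Nat.factorial_succ]
        push_cast
        ring
      rw [hfac, Real.log_mul (by linarith) (by positivity)]
      have hA := logA hx32
      have hlogm : log ((m:ℝ)+1) ≤ log (x + 11/25) := by
        apply Real.log_le_log (by linarith)
        rw [hx]; linarith
      have hcast : ((m+1:ℕ):ℝ) + c = x + 1 := by rw [hx]; push_cast; ring
      rw [hcast]
      have e1 : x*(log x - 1) = x*log x - x := by ring
      have e2 : (x+1)*(log (x+1) - 1) = (x+1)*log (x+1) - x - 1 := by ring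
      linarith [ih, hA, hlogm]
  have hkey := key n hn
  have hfpos : (0:ℝ) < (n.factorial : ℝ) := by exact_mod_cast Nat.factorial_pos n
  have hxpos : (0:ℝ) < (n:ℝ) + c := by positivity
  rw [show (n.factorial : ℝ) = exp (log (n.factorial : ℝ)) from (Real.exp_log hfpos).symm]
  rw [Real.rpow_def_of_pos (div_pos hxpos (exp_pos 1))]
  rw [Real.log_div (ne_of_gt hxpos) (exp_ne_zero 1), Real.log_exp]
  rw [← Real.exp_add]
  apply Real.exp_lt_exp.2
  nlinarith [hkey]
end

section
/- For all real x ≥ 2, √(2π)·((x + 1/2)/e)^(x + 1/2) > Γ(x+1), i.e., the upper Burnside bound extends to the gamma function for real arguments x ≥ 2 (equivalently, G_{1/2}(t) = (1/2)log(2π) + (t+1/2)log(t+1/2) − t − 1/2 − log Γ(t+1) > 0 for t ≥ 2). -/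
open Real

open Filter Topology in
private lemma bF_hasDerivAt (v : ℝ) (h1 : (0:ℝ) < 1 + v) (h2 : (0:ℝ) < 1 - v) :
    HasDerivAt (fun w : ℝ => 2*w - (1+w)*Real.log (1+w) + (1-w)*Real.log (1-w))
      (2 - (Real.log (1+v) + 1) + (-Real.log (1-v) - 1)) v := by
  have ha : HasDerivAt (fun w : ℝ => 1 + w) 1 v := (hasDerivAt_id v).const_add 1
  have hb : HasDerivAt (fun w : ℝ => 1 - w) (-1) v := (hasDerivAt_id v).const_sub 1
  have hla : HasDerivAt (fun w : ℝ => Real.log (1+w)) (1/(1+v)) v := by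
    simpa using ha.log h1.ne'
  have hlb : HasDerivAt (fun w : ℝ => Real.log (1-w)) (-1/(1-v)) v := by
    simpa using hb.log h2.ne'
  have hma : HasDerivAt (fun w : ℝ => (1+w)*Real.log (1+w))
      (Real.log (1+v) + 1) v := by
    have := ha.mul hla
    refine this.congr_deriv ?_
    rw [one_mul, mul_one_div_cancel h1.ne']
  have hmb : HasDerivAt (fun w : ℝ => (1-w)*Real.log (1-w))
      (-Real.log (1-v) - 1) v := by
    have := hb.mul hlb
    refine this.congr_deriv ?_
    rw [mul_div_assoc', mul_div_cancel_left₀ _ h2.ne']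
    ring
  have h2v : HasDerivAt (fun w : ℝ => 2*w) 2 v := by
    simpa using (hasDerivAt_id v).const_mul 2
  exact (h2v.sub hma).add hmb

private lemma bF_ineq {u : ℝ} (hu0 : 0 < u) (hu1 : u ≤ 1/2) :
    (1+u)*Real.log (1+u) - (1-u)*Real.log (1-u) < 2*u := by
  set F : ℝ → ℝ := fun w => 2*w - (1+w)*Real.log (1+w) + (1-w)*Real.log (1-w) with hF
  have key : StrictMonoOn F (Set.Icc 0 (1/2)) := by
    apply strictMonoOn_of_deriv_pos (convex_Icc _ _)
    · intro v hv
      simp only [Set.mem_Icc] at hv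
      exact ((bF_hasDerivAt v (by linarith) (by linarith)).continuousAt).continuousWithinAt
    · intro v hv
      rw [interior_Icc] at hv
      obtain ⟨hv0, hv1⟩ := hv
      have h1 : (0:ℝ) < 1 + v := by linarith
      have h2 : (0:ℝ) < 1 - v := by linarith
      rw [(bF_hasDerivAt v h1 h2).deriv]
      have hlog : Real.log (1+v) + Real.log (1-v) < 0 := by
        rw [← Real.log_mul h1.ne' h2.ne']
        apply Real.log_neg (by nlinarith) (by nlinarith)
      linarith
  have h0 : (0:ℝ) ∈ Set.Icc (0:ℝ) (1/2) := by norm_num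
  have hu : u ∈ Set.Icc (0:ℝ) (1/2) := ⟨hu0.le, hu1⟩
  have := key h0 hu hu0
  simp only [hF] at this
  norm_num at this
  linarith

private noncomputable def gb (t : ℝ) : ℝ :=
  1 + Real.log (t+1) + (t+1/2)*Real.log (t+1/2) - (t+3/2)*Real.log (t+3/2)

private lemma gb_pos {t : ℝ} (ht : 0 ≤ t) : 0 < gb t := by
  have hc : (0:ℝ) < t + 1 := by linarith
  set u : ℝ := 1/(2*(t+1)) with hu
  have hu0 : 0 < u := by positivity
  have hu1 : u ≤ 1/2 := by
    rw [hu]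
    rw [div_le_div_iff₀ (by positivity) (by norm_num)]
    linarith
  have hcu : (t+1) * u = 1/2 := by
    rw [hu]; field_simp
  have h1 : t + 1/2 = (t+1)*(1-u) := by nlinarith
  have h2 : t + 3/2 = (t+1)*(1+u) := by nlinarith
  have hF := bF_ineq hu0 hu1
  have h1u : (0:ℝ) < 1 - u := by linarith
  have h2u : (0:ℝ) < 1 + u := by linarith
  unfold gb
  rw [h1, h2, Real.log_mul hc.ne' h1u.ne', Real.log_mul hc.ne' h2u.ne']
  have hcF : (t+1) * ((1+u)*Real.log (1+u) - (1-u)*Real.log (1-u)) < (t+1) * (2*u) :=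
    mul_lt_mul_of_pos_left hF hc
  have hA : (t+1) * u * Real.log (t+1) = 1/2 * Real.log (t+1) := by rw [hcu]
  nlinarith [hcF, hcu, hA]

private lemma tangent_line {y b : ℝ} (hy : 0 < y) (hb : 0 < b) :
    y * Real.log b - b ≤ y * Real.log y - y := by
  have h := Real.log_le_sub_one_of_pos (show 0 < b/y by positivity)
  rw [Real.log_div hb.ne' hy.ne'] at h
  have h2 := mul_le_mul_of_nonneg_left h hy.le
  have hyb : y * (b/y - 1) = b - y := by field_simp
  nlinarith

private noncomputable def Lb (t : ℝ) : ℝ :=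
  Real.log (2*Real.pi)/2 + (t+1/2)*Real.log (t+1/2) - t - 1/2

private noncomputable def Gb (t : ℝ) : ℝ := Lb t - Real.log (Real.Gamma (t+1))

private noncomputable def Eb (m : ℕ) : ℝ :=
  Real.log (2*Real.pi)/2 + ((m:ℝ)+1/2)*Real.log ((m:ℝ)+1) - ((m:ℝ)+1)
    - Real.log (Nat.factorial m)

private lemma Gb_step {t : ℝ} (ht : 0 < t) : Gb t = gb t + Gb (t+1) := by
  have hΓ : Real.Gamma (t+1+1) = (t+1) * Real.Gamma (t+1) := by
    rw [Real.Gamma_add_one (by linarith)]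
  have hpos : 0 < Real.Gamma (t+1) := Real.Gamma_pos_of_pos (by linarith)
  unfold Gb Lb gb
  rw [hΓ, Real.log_mul (by linarith) hpos.ne']
  have : t + 1 + 1/2 = t + 3/2 := by ring
  rw [this]
  ring

private lemma Gb_ge {x : ℝ} (hx : 2 ≤ x) (n : ℕ) :
    gb x + Gb (x + n + 1) ≤ Gb x := by
  induction n with
  | zero =>
    simp only [Nat.cast_zero, add_zero]
    exact (Gb_step (by linarith)).ge
  | succ k ih =>
    have hstep : Gb (x + k + 1) = gb (x + k + 1) + Gb (x + k + 1 + 1) := by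
      apply Gb_step
      have := k.cast_nonneg (α := ℝ)
      linarith
    have hg : 0 < gb (x + k + 1) := by
      apply gb_pos
      have := k.cast_nonneg (α := ℝ)
      linarith
    have heq : x + (k+1:ℕ) + 1 = x + k + 1 + 1 := by push_cast; ring
    rw [heq]
    linarith

private lemma Gb_lb {s : ℝ} (hs : 2 ≤ s) : Eb ⌊s⌋₊ ≤ Gb s := by
  set m : ℕ := ⌊s⌋₊ with hm
  have hs0 : (0:ℝ) ≤ s := by linarith
  have hms : (m:ℝ) ≤ s := Nat.floor_le hs0
  have hsm : s < (m:ℝ) + 1 := Nat.lt_floor_add_one s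
  obtain ⟨θ, hθs⟩ : ∃ θ : ℝ, θ = s - (m:ℝ) := ⟨_, rfl⟩
  have hθ0 : 0 ≤ θ := by rw [hθs]; linarith
  have hθ1 : θ ≤ 1 := by rw [hθs]; linarith
  -- chord bound from log-convexity
  have hconv := Real.convexOn_log_Gamma
  have hchord : Real.log (Real.Gamma (s+1)) ≤
      (1-θ) * Real.log (Real.Gamma ((m:ℝ)+1)) + θ * Real.log (Real.Gamma ((m:ℝ)+2)) := by
    have hp : ((m:ℝ)+1) ∈ Set.Ioi (0:ℝ) := by
      simp; positivity
    have hq : ((m:ℝ)+2) ∈ Set.Ioi (0:ℝ) := by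
      simp; positivity
    have := hconv.2 hp hq (by linarith : (0:ℝ) ≤ 1 - θ) hθ0 (by ring : (1-θ) + θ = 1)
    simp only [smul_eq_mul, Function.comp_apply] at this
    have harg : (1-θ) * ((m:ℝ)+1) + θ * ((m:ℝ)+2) = s + 1 := by
      rw [hθs]; ring
    rwa [harg] at this
  have hΓm : Real.Gamma ((m:ℝ)+1) = (Nat.factorial m : ℝ) := Real.Gamma_nat_eq_factorial m
  have hΓm2 : Real.Gamma ((m:ℝ)+2) = ((m:ℝ)+1) * (Nat.factorial m : ℝ) := by
    rw [show ((m:ℝ)+2) = (m:ℝ)+1+1 by ring, Real.Gamma_add_one (by positivity), hΓm]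
  have hfacpos : (0:ℝ) < Nat.factorial m := by positivity
  have hm1pos : (0:ℝ) < (m:ℝ)+1 := by positivity
  rw [hΓm, hΓm2, Real.log_mul hm1pos.ne' hfacpos.ne'] at hchord
  -- tangent bound
  have htan := tangent_line (show (0:ℝ) < s + 1/2 by linarith) hm1pos
  unfold Gb Lb Eb
  have hθlog : θ * Real.log ((m:ℝ)+1)
      = s * Real.log ((m:ℝ)+1) - (m:ℝ) * Real.log ((m:ℝ)+1) := by
    rw [hθs]; ring
  linarith [hchord, htan, hθlog]

open Filter Topology in
private lemma Eb_tendsto : Filter.Tendsto Eb Filter.atTop (nhds 0) := by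
  have hπ : (0:ℝ) < √π := Real.sqrt_pos.mpr Real.pi_pos
  have hst : Tendsto (fun m : ℕ => Real.log (Stirling.stirlingSeq m)) atTop
      (𝓝 (Real.log π / 2)) := by
    have h := (Real.continuousAt_log hπ.ne').tendsto.comp Stirling.tendsto_stirlingSeq_sqrt_pi
    rwa [Real.log_sqrt Real.pi_pos.le] at h
  have h2 : Tendsto (fun m : ℕ => (m:ℝ) * Real.log (1 + 1/(m:ℝ))) atTop (𝓝 1) :=
    (Real.tendsto_mul_log_one_add_div_atTop 1).comp tendsto_natCast_atTop_atTop
  have h3 : Tendsto (fun m : ℕ => Real.log (1 + 1/(m:ℝ))) atTop (𝓝 0) := by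
    have : Tendsto (fun m : ℕ => 1 + 1/(m:ℝ)) atTop (𝓝 1) := by
      have := tendsto_one_div_atTop_nhds_zero_nat (𝕜 := ℝ)
      simpa using tendsto_const_nhds.add this
    have h := (Real.continuousAt_log (by norm_num : (1:ℝ) ≠ 0)).tendsto.comp this
    simpa [Function.comp_def] using h
  have key : ∀ᶠ m : ℕ in atTop, (Real.log π / 2 - Real.log (Stirling.stirlingSeq m))
      + ((m:ℝ) * Real.log (1 + 1/(m:ℝ)) - 1) + (1/2) * Real.log (1 + 1/(m:ℝ)) = Eb m := by
    filter_upwards [eventually_ge_atTop 1] with m hm1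
    have hm0 : (0:ℝ) < m := by exact_mod_cast hm1
    have hform := Stirling.log_stirlingSeq_formula m
    have hlog2m : Real.log (2*(m:ℝ)) = Real.log 2 + Real.log m :=
      Real.log_mul (by norm_num) hm0.ne'
    have hlogme : Real.log ((m:ℝ)/Real.exp 1) = Real.log m - 1 := by
      rw [Real.log_div hm0.ne' (Real.exp_ne_zero 1), Real.log_exp]
    have hlog1m : Real.log (1 + 1/(m:ℝ)) = Real.log ((m:ℝ)+1) - Real.log m := by
      rw [show (1:ℝ) + 1/(m:ℝ) = ((m:ℝ)+1)/m by field_simp]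
      exact Real.log_div (by positivity) hm0.ne'
    have hlog2π : Real.log (2*Real.pi) = Real.log 2 + Real.log Real.pi :=
      Real.log_mul (by norm_num) Real.pi_pos.ne'
    unfold Eb
    rw [hlog1m, hlog2π]
    rw [hform, hlog2m, hlogme]
    ring
  rw [← Filter.tendsto_congr' key]
  have : Tendsto (fun m : ℕ => (Real.log π / 2 - Real.log (Stirling.stirlingSeq m))
      + ((m:ℝ) * Real.log (1 + 1/(m:ℝ)) - 1) + (1/2) * Real.log (1 + 1/(m:ℝ)))
      atTop (𝓝 ((Real.log π / 2 - Real.log π / 2) + (1 - 1) + (1/2) * 0)) :=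
    ((tendsto_const_nhds.sub hst).add (h2.sub tendsto_const_nhds)).add
      (tendsto_const_nhds.mul h3)
  simpa using this

open Filter Topology in
private lemma Gb_pos {x : ℝ} (hx : 2 ≤ x) : 0 < Gb x := by
  have hgb : 0 < gb x := gb_pos (by linarith)
  have hall : ∀ n : ℕ, gb x + Eb (⌊x⌋₊ + n + 1) ≤ Gb x := by
    intro n
    have hn : (0:ℝ) ≤ n := n.cast_nonneg
    have h1 := Gb_ge hx n
    have h2 : Eb ⌊x + n + 1⌋₊ ≤ Gb (x + n + 1) := Gb_lb (by linarith)
    have h3 : ⌊x + n + 1⌋₊ = ⌊x⌋₊ + n + 1 := by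
      rw [show x + (n:ℝ) + 1 = x + ((n+1 : ℕ):ℝ) by push_cast; ring]
      rw [Nat.floor_add_natCast (by linarith) (n+1)]
      omega
    rw [h3] at h2
    linarith
  have hmap : Tendsto (fun n : ℕ => ⌊x⌋₊ + n + 1) atTop atTop :=
    tendsto_atTop_mono (fun n => by simp only [id_eq]; omega) tendsto_id
  have hlim : Tendsto (fun n : ℕ => gb x + Eb (⌊x⌋₊ + n + 1)) atTop (𝓝 (gb x + 0)) :=
    tendsto_const_nhds.add (Eb_tendsto.comp hmap)
  have : gb x + 0 ≤ Gb x := le_of_tendsto hlim (Filter.Eventually.of_forall hall)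
  linarith

theorem burnside_upper_gamma (x : ℝ) (hx : 2 ≤ x) :
    Real.Gamma (x + 1) < Real.sqrt (2 * π) * ((x + 1/2) / exp 1) ^ (x + 1/2) := by
  have hx2 : (0:ℝ) < x + 1/2 := by linarith
  have hpos : 0 < Real.Gamma (x+1) := Real.Gamma_pos_of_pos (by linarith)
  have hG := Gb_pos hx
  have hbase : (0:ℝ) < (x + 1/2) / exp 1 := by positivity
  have hRHSpos : (0:ℝ) < Real.sqrt (2*π) * ((x + 1/2) / exp 1) ^ (x + 1/2) := by
    have h2π : (0:ℝ) < 2*π := by positivity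
    positivity
  have hlogRHS : Real.log (Real.sqrt (2*π) * ((x + 1/2) / exp 1) ^ (x + 1/2)) = Lb x := by
    have h2π : (0:ℝ) < 2*π := by positivity
    rw [Real.log_mul (by positivity) (by positivity), Real.log_sqrt h2π.le,
      Real.log_rpow hbase, Real.log_div hx2.ne' (Real.exp_ne_zero 1), Real.log_exp]
    unfold Lb
    ring
  calc Real.Gamma (x+1) = Real.exp (Real.log (Real.Gamma (x+1))) := (Real.exp_log hpos).symm
    _ < Real.exp (Lb x) := by
        apply Real.exp_lt_exp.mpr
        have : Gb x = Lb x - Real.log (Real.Gamma (x+1)) := rfl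
        linarith
    _ = Real.sqrt (2*π) * ((x + 1/2) / exp 1) ^ (x + 1/2) := by
        rw [← hlogRHS, Real.exp_log hRHSpos]
end
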